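/- arXiv:2204.13689 — 4 statements merged into one kernel-verified Lean document; each statement's English description precedes it below -/
import Mathlib

section
/- Blom–Fröberg specialization (a_1 = 1): Let a_1, a_2, … be positive integers with a_1 = 1 and let k ≥ 2. Set s_k = a_2 + (a_3 + ⋯ + a_k)/2 (so s_2 = a_2). Then for every natural number n, (n+1)^{k−1}/((k−1)! · a_1⋯a_k) ≤ (1/(a_1⋯a_k)) · ∑_{i=0}^{k−2} [k−2 i]^a_2 · (n+1)^{k−1−i}/(k−1−i)! ≤ D^a_k(n) ≤ (n + s_k)^{k−1}/((k−1)! · a_1⋯a_k), as inequalities of rational numbers. -/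
/-- The denumerant: number of tuples `(x 1, …, x k)` of naturals with
`a 1 * x 1 + ⋯ + a k * x k = n`. -/
noncomputable def D (a : ℕ → ℕ) (k n : ℕ) : ℕ :=
  {x : Fin k → ℕ | ∑ i, a (i.1 + 1) * x i = n}.ncard

/-- The cumulative denumerant: number of tuples with
`a 1 * x 1 + ⋯ + a k * x k ≤ n`. -/
noncomputable def Dhat (a : ℕ → ℕ) (k n : ℕ) : ℕ :=
  {x : Fin k → ℕ | ∑ i, a (i.1 + 1) * x i ≤ n}.ncard

/-- `gcdUpTo a i = gcd (a 1, …, a i)`. -/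
def gcdUpTo (a : ℕ → ℕ) (i : ℕ) : ℕ := (Finset.Icc 1 i).gcd a

/-- The sequence `s⁺` of rationals. -/
def sPlus (a : ℕ → ℕ) : ℕ → ℚ
  | 0 => 0
  | 1 => (a 1 * a 2 : ℚ) / (2 * gcdUpTo a 2)
  | i + 2 => sPlus a (i + 1) + ((gcdUpTo a (i + 1) : ℚ) / (2 * gcdUpTo a (i + 2))) * a (i + 2)

/-- The sequence `s⁻` of integers. -/
def sMinus (a : ℕ → ℕ) : ℕ → ℤ
  | 0 => 0
  | 1 => -(a 1 : ℤ)
  | i + 2 => sMinus a (i + 1) +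
      (((gcdUpTo a (i + 1) / gcdUpTo a (i + 2) : ℕ) : ℤ) - 1) * (a (i + 2) : ℤ)

/-- Auxiliary recursion for the Blom–Fröberg number, with `m : ℕ`. -/
def bfAux (a : ℕ → ℕ) (r : ℕ) : ℕ → ℤ → ℚ
  | 0, l => if l = 0 then 1 else 0
  | m + 1, l =>
      if l < 0 ∨ (m + 1 : ℤ) < l then 0
      else bfAux a r m l + (a (m + 1 + r) : ℚ) / 2 * bfAux a r m (l - 1)

/-- The Blom–Fröberg number `[m ℓ]^a_r`. -/
def bf (a : ℕ → ℕ) (r : ℕ) (m l : ℤ) : ℚ :=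
  if m < 0 then 0 else bfAux a r m.toNat l


/-- Tangent line bound for `t^q` on nonnegative rationals. -/
lemma tangent (q : ℕ) (hq : 1 ≤ q) (s y : ℚ) (hs : 0 ≤ s) (hy : 0 ≤ y) :
    y ^ q + (q : ℚ) * y ^ (q - 1) * (s - y) ≤ s ^ q := by
  induction q with
  | zero => omega
  | succ q ih =>
    rcases Nat.eq_zero_or_pos q with h | h
    · subst h; norm_num
    · have key := ih h
      have hpow : (0:ℚ) ≤ y ^ (q-1) := by positivity
      have e2 : y ^ q = y ^ (q-1) * y := by
        conv_lhs => rw [show q = (q-1)+1 by omega]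
        rw [pow_succ]
      have h1 : s * (y ^ q + (q : ℚ) * y ^ (q - 1) * (s - y)) ≤ s * s ^ q :=
        mul_le_mul_of_nonneg_left key hs
      have e1 : y ^ (q+1) = y ^ (q-1) * y * y := by rw [← e2]; ring
      have e3 : s ^ (q+1) = s * s ^ q := by ring
      have hqn : (0:ℚ) ≤ (q:ℚ) := by positivity
      rw [show q+1-1 = q from rfl, e1, e2, e3]
      rw [e2] at h1
      push_cast
      nlinarith [mul_nonneg (mul_nonneg hqn hpow) (sq_nonneg (s-y))]

/-- Midpoint bound, case `h ≤ y`. -/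
lemma mid_ge (q : ℕ) (hq : 2 ≤ q) (y h : ℚ) (hh : 0 ≤ h) (hyh : h ≤ y) :
    (y - h) ^ q + 2 * q * h * y ^ (q - 1) ≤ (y + h) ^ q := by
  have hy : 0 ≤ y := hh.trans hyh
  induction q with
  | zero => omega
  | succ q ih =>
    rcases Nat.lt_or_ge q 2 with h2 | h2
    · interval_cases q
      · omega
      · push_cast; nlinarith
    · have key := ih h2
      have htan := tangent q (by omega) (y - h) y (by linarith) hy
      have h1 : (y+h) * ((y - h) ^ q + 2 * q * h * y ^ (q - 1)) ≤ (y+h)*(y+h)^q :=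
        mul_le_mul_of_nonneg_left key (by linarith)
      have e2 : y ^ q = y ^ (q-1) * y := by
        conv_lhs => rw [show q = (q-1)+1 by omega]
        rw [pow_succ]
      have e1 : y ^ (q+1) = y ^ (q-1) * y * y := by rw [← e2]; ring
      have e3 : (y+h) ^ (q+1) = (y+h) * (y+h) ^ q := by ring
      have e4 : (y-h) ^ (q+1) = (y-h) * (y-h) ^ q := by ring
      have hpow : (0:ℚ) ≤ y ^ (q-1) := by positivity
      rw [show q+1-1 = q from rfl, e2, e3, e4]
      rw [e2] at htan
      push_cast
      nlinarith [mul_nonneg hh (sub_nonneg.2 htan), mul_nonneg hpow hh,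
        mul_nonneg (mul_nonneg hpow hh) hh]

/-- Midpoint bound, case `y ≤ h`. -/
lemma mid_le (q : ℕ) (hq : 2 ≤ q) (y h : ℚ) (hy : 0 ≤ y) (hyh : y ≤ h) :
    2 * q * h * y ^ (q - 1) ≤ (y + h) ^ q := by
  have hh : 0 ≤ h := hy.trans hyh
  induction q with
  | zero => omega
  | succ q ih =>
    rcases Nat.lt_or_ge q 2 with h2 | h2
    · interval_cases q
      · omega
      · push_cast; nlinarith [sq_nonneg (y - h)]
    · have key := ih h2
      have e2 : y ^ q = y ^ (q-1) * y := by
        conv_lhs => rw [show q = (q-1)+1 by omega]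
        rw [pow_succ]
      have hpow : (0:ℚ) ≤ y ^ (q-1) := by positivity
      have h1 : (y+h) * (2 * q * h * y ^ (q - 1)) ≤ (y+h)*(y+h)^q :=
        mul_le_mul_of_nonneg_left key (by linarith)
      have e3 : (y+h) ^ (q+1) = (y+h) * (y+h) ^ q := by ring
      rw [show q+1-1 = q from rfl, e2, e3]
      push_cast
      -- need (y+h)*(2qh y^(q-1)) ≥ 2(q+1) h (y^(q-1) y)
      have hq0 : (2:ℚ) ≤ (q:ℚ) := by exact_mod_cast h2
      nlinarith [mul_nonneg (mul_nonneg hpow hh) (sub_nonneg.2 hyh),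
        mul_nonneg (mul_nonneg hpow hh) hy]

/-- Midpoint bound, general. -/
lemma mid_all (q : ℕ) (hq : 2 ≤ q) (y h : ℚ) (hy : 0 ≤ y) (hh : 0 ≤ h) :
    2 * q * h * y ^ (q - 1) ≤ (y + h) ^ q := by
  rcases le_total y h with hc | hc
  · exact mid_le q hq y h hy hc
  · have := mid_ge q hq y h hh hc
    have : (0:ℚ) ≤ (y - h)^q := by
      apply pow_nonneg; linarith
    linarith [mid_ge q hq y h hh hc]

/-- Trapezoid bound. -/
lemma trap (q : ℕ) (hq : 1 ≤ q) (s t : ℚ) (hs : 0 ≤ s) (hst : s ≤ t) :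
    2 * (t ^ q - s ^ q) ≤ q * (t - s) * (t ^ (q-1) + s ^ (q-1)) := by
  have ht : 0 ≤ t := hs.trans hst
  induction q with
  | zero => omega
  | succ q ih =>
    rcases Nat.eq_zero_or_pos q with h0 | h0
    · subst h0; norm_num; linarith
    · have key := ih h0
      have htan := tangent q h0 t s ht hs
      have et : t ^ q = t ^ (q-1) * t := by
        conv_lhs => rw [show q = (q-1)+1 by omega]
        rw [pow_succ]
      have es : s ^ q = s ^ (q-1) * s := by
        conv_lhs => rw [show q = (q-1)+1 by omega]
        rw [pow_succ]
      have et1 : t ^ (q+1) = t ^ (q-1) * t * t := by rw [← et]; ring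
      have es1 : s ^ (q+1) = s ^ (q-1) * s * s := by rw [← es]; ring
      rw [show q+1-1 = q from rfl, et, es, et1, es1]
      rw [et, es] at key htan
      have h1 : t * (2 * (t ^ (q-1) * t - s ^ (q-1) * s)) ≤
          t * ((q:ℚ) * (t - s) * (t ^ (q-1) + s ^ (q-1))) :=
        mul_le_mul_of_nonneg_left key ht
      have h2 : (t - s) * (s ^ (q-1) * s + (q:ℚ) * s ^ (q-1) * (t - s)) ≤
          (t - s) * (t ^ (q-1) * t) :=
        mul_le_mul_of_nonneg_left htan (by linarith)
      push_cast
      nlinarith [h1, h2]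

lemma sum_upper (q : ℕ) (hq : 2 ≤ q) (c : ℚ) (hc : 0 < c) :
    ∀ (M : ℕ) (z : ℚ), 0 ≤ z - c * M →
      (q : ℚ) * c * ∑ v ∈ Finset.range (M+1), (z - c*v)^(q-1) ≤ (z + c/2)^q := by
  intro M
  induction M with
  | zero =>
    intro z hz
    rw [Finset.sum_range_one]
    norm_num at hz ⊢
    have := mid_all q hq z (c/2) (by linarith) (by linarith)
    linarith
  | succ M ih =>
    intro z hz
    have hz' : 0 ≤ (z - c) - c * M := by push_cast at hz ⊢; linarith
    have ihz := ih (z - c) hz'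
    rw [Finset.sum_range_succ']
    push_cast
    have hsum : ∑ x ∈ Finset.range (M+1), (z - c*((x:ℚ)+1))^(q-1)
        = ∑ v ∈ Finset.range (M+1), ((z - c) - c*(v:ℚ))^(q-1) := by
      apply Finset.sum_congr rfl
      intro v _
      ring_nf
    rw [hsum]
    have hmid := mid_ge q hq z (c/2) (by linarith) (by push_cast at hz; nlinarith)
    have : (z - c + c/2) = z - c/2 := by ring
    rw [this] at ihz
    rw [mul_add]
    norm_num
    nlinarith [ihz, hmid]

lemma sum_lower (q : ℕ) (hq : 2 ≤ q) (c : ℚ) (hc : 0 < c) :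
    ∀ (M : ℕ) (z : ℚ), 0 < z - c * M → z - c * M ≤ c →
      z^q + (q : ℚ) * c / 2 * z^(q-1) ≤
        (q : ℚ) * c * ∑ v ∈ Finset.range (M+1), (z - c*v)^(q-1) := by
  intro M
  induction M with
  | zero =>
    intro z hz1 hz2
    rw [Finset.sum_range_one]
    norm_num at hz1 hz2 ⊢
    have hzq : z ^ q = z^(q-1) * z := by
      conv_lhs => rw [show q = (q-1)+1 by omega]
      rw [pow_succ]
    have hpow : (0:ℚ) ≤ z^(q-1) := by positivity
    have hq2 : (2:ℚ) ≤ (q:ℚ) := by exact_mod_cast hq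
    rw [hzq]
    nlinarith [mul_le_mul_of_nonneg_left hz2 hpow,
      mul_nonneg (mul_nonneg (by linarith : (0:ℚ) ≤ (q:ℚ) - 2) hc.le) hpow]
  | succ M ih =>
    intro z hz1 hz2
    have h1' : 0 < (z - c) - c * M := by push_cast at hz1 ⊢; linarith
    have h2' : (z - c) - c * M ≤ c := by push_cast at hz2 ⊢; linarith
    have ihz := ih (z - c) h1' h2'
    rw [Finset.sum_range_succ']
    push_cast
    have hsum : ∑ x ∈ Finset.range (M+1), (z - c*((x:ℚ)+1))^(q-1)
        = ∑ v ∈ Finset.range (M+1), ((z - c) - c*(v:ℚ))^(q-1) := by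
      apply Finset.sum_congr rfl
      intro v _
      ring_nf
    rw [hsum, mul_add]
    norm_num
    have hzc : 0 ≤ z - c := by nlinarith
    have htrap := trap q (by omega) (z - c) z (by linarith) (by linarith)
    nlinarith [ihz, htrap]

lemma bfAux_neg (a : ℕ → ℕ) (r : ℕ) : ∀ (m : ℕ) (l : ℤ), l < 0 → bfAux a r m l = 0 := by
  intro m l hl
  cases m with
  | zero => rw [bfAux]; rw [if_neg]; omega
  | succ m => rw [bfAux, if_pos (Or.inl hl)]

lemma bfAux_gt (a : ℕ → ℕ) (r : ℕ) : ∀ (m : ℕ) (l : ℤ), (m : ℤ) < l → bfAux a r m l = 0 := by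
  intro m l hl
  cases m with
  | zero => rw [bfAux]; rw [if_neg]; omega
  | succ m => 
    push_cast at hl
    rw [bfAux, if_pos (Or.inr hl)]

lemma bfAux_nonneg (a : ℕ → ℕ) (r : ℕ) : ∀ (m : ℕ) (l : ℤ), 0 ≤ bfAux a r m l := by
  intro m
  induction m with
  | zero => intro l; rw [bfAux]; split <;> norm_num
  | succ m ih =>
    intro l
    rw [bfAux]
    split
    · exact le_rfl
    · exact add_nonneg (ih l) (mul_nonneg (by positivity) (ih (l-1)))

lemma bfAux_l0 (a : ℕ → ℕ) (r : ℕ) : ∀ (m : ℕ), bfAux a r m 0 = 1 := by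
  intro m
  induction m with
  | zero => rw [bfAux]; norm_num
  | succ m ih =>
    rw [bfAux, if_neg (by push_neg; constructor <;> positivity)]
    rw [ih, bfAux_neg a r m (0-1) (by omega)]
    ring

lemma bfAux_rec (a : ℕ → ℕ) (r m : ℕ) (l : ℤ) (h0 : 0 ≤ l) (h1 : l ≤ (m:ℤ) + 1) :
    bfAux a r (m+1) l = bfAux a r m l + (a (m + 1 + r) : ℚ) / 2 * bfAux a r m (l - 1) := by
  rw [bfAux, if_neg (by omega)]

/-- Finset representation of the Dhat set. -/
def Ffin (b : ℕ → ℕ) : (j : ℕ) → ℕ → Finset (Fin j → ℕ)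
  | 0, _ => {(fun i => i.elim0)}
  | j+1, n => (Finset.range (n / b (j+1) + 1)).biUnion
      (fun v => (Ffin b j (n - b (j+1) * v)).image (fun y => Fin.snoc y v))

lemma sum_snoc (b : ℕ → ℕ) (j : ℕ) (x : Fin (j+1) → ℕ) :
    ∑ i : Fin (j+1), b (i.1+1) * x i
      = (∑ i : Fin j, b (i.1+1) * (Fin.init x) i) + b (j+1) * x (Fin.last j) := by
  rw [Fin.sum_univ_castSucc]
  rfl

lemma mem_Ffin (b : ℕ → ℕ) (hb : ∀ i, 1 ≤ b i) :
    ∀ (j n : ℕ) (x : Fin j → ℕ), x ∈ Ffin b j n ↔ ∑ i, b (i.1 + 1) * x i ≤ n := by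
  intro j
  induction j with
  | zero =>
    intro n x
    simp [Ffin, Subsingleton.elim x (fun i => i.elim0)]
  | succ j ih =>
    intro n x
    constructor
    · intro hx
      simp only [Ffin, Finset.mem_biUnion, Finset.mem_range, Finset.mem_image] at hx
      obtain ⟨v, hv, y, hy, rfl⟩ := hx
      rw [sum_snoc]
      have h1 := (ih _ y).1 hy
      have h2 : (Fin.init (Fin.snoc y v : Fin (j+1) → ℕ)) = y := by simp
      have h3 : (Fin.snoc y v : Fin (j+1) → ℕ) (Fin.last j) = v := by simp
      rw [h2, h3]
      have hvc : b (j+1) * v ≤ n := by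
        have : v ≤ n / b (j+1) := by omega
        calc b (j+1) * v ≤ b (j+1) * (n / b (j+1)) := Nat.mul_le_mul_left _ this
        _ ≤ n := Nat.mul_div_le n (b (j+1))
      omega
    · intro hx
      rw [sum_snoc] at hx
      simp only [Ffin, Finset.mem_biUnion, Finset.mem_range, Finset.mem_image]
      refine ⟨x (Fin.last j), ?_, Fin.init x, ?_, Fin.snoc_init_self x⟩
      · have hle : b (j+1) * x (Fin.last j) ≤ n := by omega
        rw [Nat.mul_comm] at hle
        have := (Nat.le_div_iff_mul_le (hb (j+1))).2 hle
        omega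
      · rw [ih]
        omega

lemma Dhat_eq_card (b : ℕ → ℕ) (hb : ∀ i, 1 ≤ b i) (j n : ℕ) :
    Dhat b j n = (Ffin b j n).card := by
  rw [Dhat]
  have : {x : Fin j → ℕ | ∑ i, b (i.1 + 1) * x i ≤ n} = (Ffin b j n : Set (Fin j → ℕ)) := by
    ext x
    simp [mem_Ffin b hb j n x]
  rw [this, Set.ncard_coe_finset]

lemma Dhat_zero (b : ℕ → ℕ) (hb : ∀ i, 1 ≤ b i) (n : ℕ) : Dhat b 0 n = 1 := by
  rw [Dhat_eq_card b hb]; simp [Ffin]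

lemma Dhat_succ (b : ℕ → ℕ) (hb : ∀ i, 1 ≤ b i) (j n : ℕ) :
    Dhat b (j+1) n = ∑ v ∈ Finset.range (n / b (j+1) + 1), Dhat b j (n - b (j+1) * v) := by
  rw [Dhat_eq_card b hb]
  rw [Ffin]
  rw [Finset.card_biUnion]
  · apply Finset.sum_congr rfl
    intro v _
    have hinj : Function.Injective (fun y : Fin j → ℕ => (Fin.snoc y v : Fin (j+1) → ℕ)) := by
      intro y y' h
      have := congrArg Fin.init h
      simpa using this
    rw [Finset.card_image_of_injective _ hinj, Dhat_eq_card b hb]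
  · intro v _ w _ hvw
    simp only [Finset.disjoint_left, Finset.mem_image]
    rintro x ⟨y, _, rfl⟩ ⟨y', _, hy'⟩
    apply hvw
    have := congrArg (fun z => z (Fin.last j)) hy'
    simpa [Fin.snoc_last] using this.symm

lemma D_eq_Dhat (a : ℕ → ℕ) (ha1 : a 1 = 1) (j n : ℕ) :
    D a (j+1) n = Dhat (fun i => a (i+1)) j n := by
  rw [D, Dhat]
  have hsum : ∀ x : Fin (j+1) → ℕ,
      ∑ i : Fin (j+1), a (i.1+1) * x i = x 0 + ∑ i : Fin j, a (i.1+2) * (Fin.tail x) i := by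
    intro x
    rw [Fin.sum_univ_succ]
    simp only [Fin.val_zero, ha1, one_mul, Fin.val_succ]
    rfl
  have himg : {x : Fin (j+1) → ℕ | ∑ i, a (i.1 + 1) * x i = n}
      = (fun y : Fin j → ℕ => Fin.cons (n - ∑ i, a (i.1+2) * y i) y) ''
        {y : Fin j → ℕ | ∑ i, a (i.1 + 2) * y i ≤ n} := by
    ext x
    constructor
    · intro hx
      simp only [Set.mem_setOf_eq] at hx
      rw [hsum] at hx
      refine ⟨Fin.tail x, by simp only [Set.mem_setOf_eq]; omega, ?_⟩
      simp only
      have : n - ∑ i, a (i.1+2) * (Fin.tail x) i = x 0 := by omega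
      rw [this]
      exact Fin.cons_self_tail x
    · rintro ⟨y, hy, rfl⟩
      simp only [Set.mem_setOf_eq] at hy ⊢
      rw [hsum]
      have h0 : (Fin.cons (n - ∑ i, a (i.1+2) * y i) y : Fin (j+1) → ℕ) 0
          = n - ∑ i, a (i.1+2) * y i := rfl
      have ht : Fin.tail (Fin.cons (n - ∑ i, a (i.1+2) * y i) y : Fin (j+1) → ℕ) = y := by
        simp
      rw [h0, ht]
      omega
  have hinj : Function.Injective
      (fun y : Fin j → ℕ => Fin.cons (n - ∑ i, a (i.1+2) * y i) y : (Fin j → ℕ) → (Fin (j+1) → ℕ)) := by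
    intro y y' h
    have := congrArg Fin.tail h
    simpa using this
  rw [himg, Set.ncard_image_of_injective _ hinj]

lemma upper (b : ℕ → ℕ) (hb : ∀ i, 1 ≤ b i) :
    ∀ j, 1 ≤ j → ∀ n : ℕ,
      (Dhat b j n : ℚ) * (Nat.factorial j) * (∏ i ∈ Finset.Icc 1 j, (b i : ℚ))
        ≤ ((n:ℚ) + ((b 1 : ℚ) + (∑ i ∈ Finset.Icc 2 j, (b i : ℚ))/2)) ^ j := by
  intro j
  induction j with
  | zero => omega
  | succ j ih =>
    intro _ n
    rcases Nat.eq_zero_or_pos j with rfl | hj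
    · -- base case j+1 = 1
      rw [Dhat_succ b hb, Finset.sum_congr rfl (fun v _ => Dhat_zero b hb _),
        Finset.sum_const, Finset.card_range]
      simp only [Nat.factorial_one, Nat.cast_one, mul_one, smul_eq_mul,
        Finset.Icc_self, Finset.prod_singleton, pow_one]
      have h1 : Finset.Icc 2 1 = ∅ := by decide
      rw [h1]
      simp only [Finset.sum_empty, zero_div, add_zero]
      have hdm : (b 1 : ℚ) * ((n / b 1 : ℕ) : ℚ) ≤ (n : ℚ) := by
        exact_mod_cast Nat.mul_div_le n (b 1)
      norm_num [Nat.factorial]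
      push_cast
      nlinarith [hdm]
    · -- inductive step
      have hc : 0 < (b (j+1) : ℚ) := by exact_mod_cast hb (j+1)
      set c : ℚ := (b (j+1) : ℚ) with hcdef
      rw [Dhat_succ b hb]
      -- rewrite the products and factorial
      have hfact : ((Nat.factorial (j+1) : ℚ)) = (j+1) * (Nat.factorial j) := by
        push_cast [Nat.factorial_succ]; ring
      have hprod : (∏ i ∈ Finset.Icc 1 (j+1), (b i : ℚ))
          = (∏ i ∈ Finset.Icc 1 j, (b i : ℚ)) * c := by
        rw [← Finset.prod_Icc_succ_top (by omega : 1 ≤ j+1)]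
      have hsig : (b 1 : ℚ) + (∑ i ∈ Finset.Icc 2 (j+1), (b i : ℚ))/2
          = ((b 1 : ℚ) + (∑ i ∈ Finset.Icc 2 j, (b i : ℚ))/2) + c/2 := by
        rw [Finset.sum_Icc_succ_top (by omega : 2 ≤ j+1)]
        ring
      set σ : ℚ := (b 1 : ℚ) + (∑ i ∈ Finset.Icc 2 j, (b i : ℚ))/2 with hσdef
      have hσ0 : 0 ≤ σ := by
        have h1 : (1:ℚ) ≤ (b 1 : ℚ) := by exact_mod_cast hb 1
        have h2 : 0 ≤ ∑ i ∈ Finset.Icc 2 j, (b i : ℚ) :=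
          Finset.sum_nonneg fun i _ => by positivity
        rw [hσdef]; linarith
      rw [hfact, hprod, hsig]
      push_cast
      -- bound each summand by IH
      have hM : c * ((n / b (j+1) : ℕ) : ℚ) ≤ (n : ℚ) := by
        rw [hcdef]; exact_mod_cast Nat.mul_div_le n (b (j+1))
      set M := n / b (j+1) with hMdef
      have step1 : ((∑ v ∈ Finset.range (M+1), (Dhat b j (n - b (j+1) * v) : ℚ)))
            * (Nat.factorial j) * (∏ i ∈ Finset.Icc 1 j, (b i : ℚ))
          ≤ ∑ v ∈ Finset.range (M+1), ((n:ℚ) + σ - c * v)^j := by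
        rw [Finset.sum_mul, Finset.sum_mul]
        apply Finset.sum_le_sum
        intro v hv
        have hvM : v ≤ M := by simp at hv; omega
        have hcv : b (j+1) * v ≤ n := by
          calc b (j+1) * v ≤ b (j+1) * M := Nat.mul_le_mul_left _ hvM
          _ ≤ n := Nat.mul_div_le n (b (j+1))
        have := ih hj (n - b (j+1) * v)
        have hcast : ((n - b (j+1) * v : ℕ) : ℚ) = (n : ℚ) - c * v := by
          push_cast [hcv]; ring
        rw [hcast] at this
        calc (Dhat b j (n - b (j+1)*v) : ℚ) * (Nat.factorial j) * (∏ i ∈ Finset.Icc 1 j, (b i : ℚ))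
            ≤ ((n:ℚ) - c*v + σ)^j := this
        _ = ((n:ℚ) + σ - c*v)^j := by ring
      have step2 := sum_upper (j+1) (by omega) c hc M ((n:ℚ) + σ) (by push_cast; linarith)
      rw [show (j+1) - 1 = j from rfl] at step2
      push_cast at step2
      calc (∑ v ∈ Finset.range (M+1), (Dhat b j (n - b (j+1) * v) : ℚ))
            * (((j:ℚ)+1) * (Nat.factorial j)) * ((∏ i ∈ Finset.Icc 1 j, (b i : ℚ)) * c)
          = ((j:ℚ)+1) * c * ((∑ v ∈ Finset.range (M+1), (Dhat b j (n - b (j+1) * v) : ℚ))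
            * (Nat.factorial j) * (∏ i ∈ Finset.Icc 1 j, (b i : ℚ))) := by ring
        _ ≤ ((j:ℚ)+1) * c * (∑ v ∈ Finset.range (M+1), ((n:ℚ) + σ - c * v)^j) := by
            apply mul_le_mul_of_nonneg_left step1
            positivity
        _ ≤ ((n:ℚ) + σ + c/2)^(j+1) := step2
        _ = ((n:ℚ) + (σ + c/2))^(j+1) := by ring

lemma lower (a : ℕ → ℕ) (ha : ∀ i, 1 ≤ a i) :
    ∀ j, 1 ≤ j → ∀ n : ℕ,
      ∑ i ∈ Finset.range j,
          bfAux a 2 (j-1) (i:ℤ) * ((n:ℚ)+1)^(j-i) / (Nat.factorial (j-i) : ℚ)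
        ≤ (∏ i ∈ Finset.Icc 1 j, (a (i+1) : ℚ)) * (Dhat (fun i => a (i+1)) j n) := by
  have hb : ∀ i, 1 ≤ (fun i => a (i+1)) i := fun i => ha (i+1)
  intro j
  induction j with
  | zero => omega
  | succ j ih =>
    intro _ n
    rcases Nat.eq_zero_or_pos j with rfl | hj
    · -- base case: j + 1 = 1
      rw [Dhat_succ _ hb, Finset.sum_congr rfl (fun v _ => Dhat_zero _ hb _),
        Finset.sum_const, Finset.card_range, Finset.sum_range_one]
      simp only [Nat.sub_self, Finset.Icc_self, Finset.prod_singleton, Nat.cast_zero,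
        bfAux_l0, pow_one, Nat.factorial_one, Nat.cast_one, smul_eq_mul, mul_one, one_mul]
      have h1 : n < a 2 * (n / a 2) + a 2 := by
        have h2 := Nat.div_add_mod n (a 2)
        have h3 : n % a 2 < a 2 := Nat.mod_lt n (ha 2)
        omega
      have h1'' : n + 1 ≤ a 2 * (n / a 2) + a 2 := h1
      have h1' : ((n:ℚ)) + 1 ≤ (a 2 : ℚ) * ((n / a 2 : ℕ):ℚ) + (a 2 : ℚ) := by exact_mod_cast h1
      norm_num [Nat.factorial]
      push_cast
      nlinarith [h1']
    · -- inductive step: from j ≥ 1 to j+1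
      have hJJ : ∀ m : ℕ, m + 1 + 1 = m + 2 := fun m => rfl
      have hc : 0 < (a (j+2) : ℚ) := by exact_mod_cast ha (j+2)
      have hc' : (0:ℚ) ≤ (a (j+2) : ℚ) := le_of_lt hc
      set z : ℚ := (n:ℚ) + 1 with hzdef
      set c : ℚ := (a (j+2) : ℚ) with hcdef
      set M := n / a (j+2) with hMdef
      have hM1 : a (j+2) * M ≤ n := Nat.mul_div_le n (a (j+2))
      have hM2 : n < a (j+2) * M + a (j+2) := by
        have h2 := Nat.div_add_mod n (a (j+2))
        rw [← hMdef] at h2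
        have h3 : n % a (j+2) < a (j+2) := Nat.mod_lt n (ha (j+2))
        omega
      have hM1' : c * (M:ℚ) ≤ (n:ℚ) := by rw [hcdef]; exact_mod_cast hM1
      have hM2' : (n:ℚ) + 1 ≤ c * (M:ℚ) + c := by
        rw [hcdef]
        have hM2'' : n + 1 ≤ a (j+2) * M + a (j+2) := hM2
        exact_mod_cast hM2
      -- eq1 : bf recursion identity
      have eq1 : ∑ i ∈ Finset.range (j+1),
            bfAux a 2 j (i:ℤ) * z^(j+1-i) / (Nat.factorial (j+1-i) : ℚ)
          = (∑ i ∈ Finset.range j,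
              bfAux a 2 (j-1) (i:ℤ) * z^(j+1-i) / (Nat.factorial (j+1-i) : ℚ))
            + (∑ i ∈ Finset.range j,
              c/2 * (bfAux a 2 (j-1) (i:ℤ) * z^(j-i) / (Nat.factorial (j-i) : ℚ))) := by
        have hrec : ∀ i ∈ Finset.range (j+1),
            bfAux a 2 j (i:ℤ) * z^(j+1-i) / (Nat.factorial (j+1-i) : ℚ)
            = bfAux a 2 (j-1) (i:ℤ) * z^(j+1-i) / (Nat.factorial (j+1-i) : ℚ)
              + c/2 * (bfAux a 2 (j-1) ((i:ℤ)-1) * z^(j+1-i) / (Nat.factorial (j+1-i) : ℚ)) := by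
          intro i hi
          simp only [Finset.mem_range] at hi
          have h := bfAux_rec a 2 (j-1) (i:ℤ) (by positivity) (by push_cast; omega)
          rw [show j-1+1 = j by omega] at h
          rw [h, ← hcdef]
          ring
        rw [Finset.sum_congr rfl hrec, Finset.sum_add_distrib]
        congr 1
        · rw [Finset.sum_range_succ, bfAux_gt a 2 (j-1) ((j:ℕ):ℤ) (by push_cast; omega)]
          simp
        · rw [Finset.sum_range_succ']
          have h0 : c/2 * (bfAux a 2 (j-1) (((0:ℕ):ℤ)-1) * z^(j+1-0) / (Nat.factorial (j+1-0) : ℚ)) = 0 := by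
            rw [bfAux_neg a 2 (j-1) _ (by omega)]
            ring
          rw [h0, add_zero]
          refine Finset.sum_congr rfl fun i hi => ?_
          have e1 : ((i+1:ℕ):ℤ) - 1 = (i:ℤ) := by push_cast; ring
          have e2 : j+1-(i+1) = j - i := by omega
          rw [e1, e2]
      -- key : per-i application of sum_lower
      have key : ∀ i ∈ Finset.range j,
          bfAux a 2 (j-1) (i:ℤ) * z^(j+1-i) / (Nat.factorial (j+1-i) : ℚ)
            + c/2 * (bfAux a 2 (j-1) (i:ℤ) * z^(j-i) / (Nat.factorial (j-i) : ℚ))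
          ≤ bfAux a 2 (j-1) (i:ℤ) / (Nat.factorial (j-i) : ℚ)
              * (c * ∑ v ∈ Finset.range (M+1), (z - c*v)^(j-i)) := by
        intro i hi
        simp only [Finset.mem_range] at hi
        have hp1 : 1 ≤ j - i := by omega
        set p := j - i with hpdef
        have hq := sum_lower (p+1) (by omega) c hc M z (by rw [hzdef]; push_cast; linarith)
          (by rw [hzdef]; push_cast; linarith)
        rw [show p+1-1 = p from rfl] at hq
        have hw : 0 ≤ bfAux a 2 (j-1) (i:ℤ) := bfAux_nonneg a 2 _ _
        have hfp : (0:ℚ) < (Nat.factorial p : ℚ) := by exact_mod_cast Nat.factorial_pos p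
        have hfac : (Nat.factorial (j+1-i) : ℚ) = ((p:ℚ)+1) * (Nat.factorial p : ℚ) := by
          rw [show j+1-i = p+1 by omega]
          push_cast [Nat.factorial_succ]
          ring
        rw [show j+1-i = p+1 by omega] at hfac ⊢
        rw [hfac]
        have hmul := mul_le_mul_of_nonneg_left hq
          (by positivity : (0:ℚ) ≤ bfAux a 2 (j-1) (i:ℤ) / (((p:ℚ)+1) * (Nat.factorial p : ℚ)))
        have hp0 : ((p:ℚ)+1) ≠ 0 := by positivity
        have hf0 : (Nat.factorial p : ℚ) ≠ 0 := ne_of_gt hfp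
        refine le_trans (le_of_eq ?_) (le_trans hmul (le_of_eq ?_))
        · push_cast
          field_simp
        · push_cast
          field_simp
      -- swap sums
      have swap : (∑ i ∈ Finset.range j, bfAux a 2 (j-1) (i:ℤ) / (Nat.factorial (j-i) : ℚ)
              * (c * ∑ v ∈ Finset.range (M+1), (z - c*v)^(j-i)))
          = ∑ v ∈ Finset.range (M+1), c * (∑ i ∈ Finset.range j,
              bfAux a 2 (j-1) (i:ℤ) * (z - c*(v:ℚ))^(j-i) / (Nat.factorial (j-i) : ℚ)) := by
        simp only [Finset.mul_sum]
        rw [Finset.sum_comm]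
        refine Finset.sum_congr rfl fun v _ => Finset.sum_congr rfl fun i _ => by ring
      -- apply IH termwise
      have hIH : ∀ v ∈ Finset.range (M+1),
          c * (∑ i ∈ Finset.range j,
              bfAux a 2 (j-1) (i:ℤ) * (z - c*(v:ℚ))^(j-i) / (Nat.factorial (j-i) : ℚ))
          ≤ c * ((∏ i ∈ Finset.Icc 1 j, (a (i+1) : ℚ)) * (Dhat (fun i => a (i+1)) j (n - a (j+2) * v))) := by
        intro v hv
        simp only [Finset.mem_range] at hv
        have hvM : v ≤ M := by omega
        have hav : a (j+2) * v ≤ n := by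
          calc a (j+2) * v ≤ a (j+2) * M := Nat.mul_le_mul_left _ hvM
          _ ≤ n := hM1
        have hcast : ((n - a (j+2) * v : ℕ) : ℚ) + 1 = z - c * v := by
          rw [Nat.cast_sub hav, hzdef, hcdef]
          push_cast
          ring
        have hIH' := ih hj (n - a (j+2) * v)
        rw [hcast] at hIH'
        exact mul_le_mul_of_nonneg_left hIH' hc'
      -- conclude
      calc ∑ i ∈ Finset.range (j+1),
            bfAux a 2 (j+1-1) (i:ℤ) * (((n:ℚ))+1)^(j+1-i) / (Nat.factorial (j+1-i) : ℚ)
          = (∑ i ∈ Finset.range j,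
              bfAux a 2 (j-1) (i:ℤ) * z^(j+1-i) / (Nat.factorial (j+1-i) : ℚ))
            + (∑ i ∈ Finset.range j,
              c/2 * (bfAux a 2 (j-1) (i:ℤ) * z^(j-i) / (Nat.factorial (j-i) : ℚ))) := eq1
        _ = ∑ i ∈ Finset.range j,
              (bfAux a 2 (j-1) (i:ℤ) * z^(j+1-i) / (Nat.factorial (j+1-i) : ℚ)
              + c/2 * (bfAux a 2 (j-1) (i:ℤ) * z^(j-i) / (Nat.factorial (j-i) : ℚ))) := by
            rw [Finset.sum_add_distrib]
        _ ≤ ∑ i ∈ Finset.range j, bfAux a 2 (j-1) (i:ℤ) / (Nat.factorial (j-i) : ℚ)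
              * (c * ∑ v ∈ Finset.range (M+1), (z - c*v)^(j-i)) := Finset.sum_le_sum key
        _ = ∑ v ∈ Finset.range (M+1), c * (∑ i ∈ Finset.range j,
              bfAux a 2 (j-1) (i:ℤ) * (z - c*(v:ℚ))^(j-i) / (Nat.factorial (j-i) : ℚ)) := swap
        _ ≤ ∑ v ∈ Finset.range (M+1),
              c * ((∏ i ∈ Finset.Icc 1 j, (a (i+1) : ℚ)) * (Dhat (fun i => a (i+1)) j (n - a (j+2) * v))) :=
            Finset.sum_le_sum hIH
        _ = (∏ i ∈ Finset.Icc 1 (j+1), (a (i+1) : ℚ)) * (Dhat (fun i => a (i+1)) (j+1) n) := by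
            rw [Dhat_succ _ hb j n, Finset.prod_Icc_succ_top (by omega : 1 ≤ j+1)]
            push_cast
            rw [Finset.mul_sum]
            refine Finset.sum_congr rfl fun v _ => ?_
            rw [hcdef]
            push_cast [hJJ j]
            ring

lemma reindexProd (f : ℕ → ℚ) (j : ℕ) :
    ∏ i ∈ Finset.Icc 2 (j+1), f i = ∏ i ∈ Finset.Icc 1 j, f (i+1) := by
  rw [← Finset.map_add_right_Icc 1 j 1, Finset.prod_map]
  rfl

lemma reindexSum (f : ℕ → ℚ) (j : ℕ) :
    ∑ i ∈ Finset.Icc 3 (j+1), f i = ∑ i ∈ Finset.Icc 2 j, f (i+1) := by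
  rw [← Finset.map_add_right_Icc 2 j 1, Finset.sum_map]
  rfl

/-- Blom–Fröberg specialization (`a 1 = 1`). -/
theorem blom_froberg_special (a : ℕ → ℕ) (ha : ∀ i, 1 ≤ a i) (ha1 : a 1 = 1)
    (k : ℕ) (hk : 2 ≤ k) (n : ℕ) :
    ((n : ℚ) + 1) ^ (k - 1) /
        ((Nat.factorial (k - 1) : ℚ) * ∏ i ∈ Finset.Icc 1 k, (a i : ℚ)) ≤
      (1 / ∏ i ∈ Finset.Icc 1 k, (a i : ℚ)) *
        ∑ i ∈ Finset.range (k - 1),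
          bf a 2 ((k : ℤ) - 2) (i : ℤ) *
            ((n : ℚ) + 1) ^ (k - 1 - i) / (Nat.factorial (k - 1 - i) : ℚ)
    ∧ (1 / ∏ i ∈ Finset.Icc 1 k, (a i : ℚ)) *
        ∑ i ∈ Finset.range (k - 1),
          bf a 2 ((k : ℤ) - 2) (i : ℤ) *
            ((n : ℚ) + 1) ^ (k - 1 - i) / (Nat.factorial (k - 1 - i) : ℚ)
      ≤ (D a k n : ℚ)
    ∧ (D a k n : ℚ) ≤
        ((n : ℚ) + ((a 2 : ℚ) + (∑ i ∈ Finset.Icc 3 k, (a i : ℚ)) / 2)) ^ (k - 1) /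
          ((Nat.factorial (k - 1) : ℚ) * ∏ i ∈ Finset.Icc 1 k, (a i : ℚ)) := by
  obtain ⟨j, rfl⟩ : ∃ j, k = j + 1 := ⟨k - 1, by omega⟩
  have hj : 1 ≤ j := by omega
  have hb : ∀ i, 1 ≤ (fun i => a (i+1)) i := fun i => ha (i+1)
  -- identify bf with bfAux
  have hbf : ∀ i : ℕ, bf a 2 (((j+1:ℕ) : ℤ) - 2) (i:ℤ) = bfAux a 2 (j-1) (i:ℤ) := by
    intro i
    rw [bf, if_neg (by push_cast; omega)]
    congr 1
    push_cast
    omega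
  -- identify products
  have hP1 : ∏ i ∈ Finset.Icc 1 (j+1), (a i : ℚ)
      = ∏ i ∈ Finset.Icc 1 j, (a (i+1) : ℚ) := by
    have hins : Finset.Icc 1 (j+1) = insert 1 (Finset.Icc 2 (j+1)) := by
      ext x
      simp only [Finset.mem_Icc, Finset.mem_insert]
      omega
    rw [hins, Finset.prod_insert (by simp), ha1, reindexProd]
    norm_num
  have hPpos : (0:ℚ) < ∏ i ∈ Finset.Icc 1 (j+1), (a i : ℚ) := by
    apply Finset.prod_pos
    intro i _
    exact_mod_cast ha i
  set P : ℚ := ∏ i ∈ Finset.Icc 1 (j+1), (a i : ℚ) with hPdef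
  -- the bf sum
  have hBsum : ∑ i ∈ Finset.range (j+1-1),
        bf a 2 (((j+1:ℕ) : ℤ) - 2) (i:ℤ) * ((n:ℚ)+1)^(j+1-1-i) / (Nat.factorial (j+1-1-i) : ℚ)
      = ∑ i ∈ Finset.range j,
        bfAux a 2 (j-1) (i:ℤ) * ((n:ℚ)+1)^(j-i) / (Nat.factorial (j-i) : ℚ) := by
    refine Finset.sum_congr rfl fun i _ => ?_
    rw [hbf i]
    norm_num
  have hDD : (D a (j+1) n : ℚ) = (Dhat (fun i => a (i+1)) j n : ℚ) := by
    rw [D_eq_Dhat a ha1 j n]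
  set S : ℚ := ∑ i ∈ Finset.range j,
      bfAux a 2 (j-1) (i:ℤ) * ((n:ℚ)+1)^(j-i) / (Nat.factorial (j-i) : ℚ) with hSdef
  have hS1 : ((n:ℚ)+1)^j / (Nat.factorial j : ℚ) ≤ S := by
    have h0 : (0:ℕ) ∈ Finset.range j := by simp; omega
    have hterm : ∀ i ∈ Finset.range j,
        (0:ℚ) ≤ bfAux a 2 (j-1) (i:ℤ) * ((n:ℚ)+1)^(j-i) / (Nat.factorial (j-i) : ℚ) := by
      intro i _
      apply div_nonneg _ (by positivity)
      exact mul_nonneg (bfAux_nonneg a 2 _ _) (by positivity)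
    have := Finset.single_le_sum hterm h0
    rw [hSdef]
    norm_num [bfAux_l0] at this
    simpa using this
  have hlow := lower a ha j hj n
  have hup := upper (fun i => a (i+1)) hb j hj n
  rw [← hP1] at hlow hup
  rw [← hSdef] at hlow
  refine ⟨?_, ?_, ?_⟩
  · -- first inequality
    rw [hBsum]
    have : ((n:ℚ)+1)^(j+1-1) / ((Nat.factorial (j+1-1) : ℚ) * P)
        = (1/P) * (((n:ℚ)+1)^j / (Nat.factorial j : ℚ)) := by
      field_simp
      rw [show j + 1 - 1 = j by omega]
      ring
    rw [this]
    apply mul_le_mul_of_nonneg_left hS1 (by positivity)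
  · -- second inequality
    rw [hBsum, hDD]
    calc (1/P) * S ≤ (1/P) * (P * (Dhat (fun i => a (i+1)) j n : ℚ)) := by
          apply mul_le_mul_of_nonneg_left hlow (by positivity)
      _ = (Dhat (fun i => a (i+1)) j n : ℚ) := by
          field_simp
  · -- third inequality
    rw [hDD]
    rw [le_div_iff₀ (by positivity)]
    calc (Dhat (fun i => a (i+1)) j n : ℚ) * ((Nat.factorial (j+1-1) : ℚ) * P)
        = (Dhat (fun i => a (i+1)) j n : ℚ) * (Nat.factorial j : ℚ) * P := by
          norm_num; ring
      _ ≤ ((n:ℚ) + ((((fun i : ℕ => a (i+1)) 1 : ℕ) : ℚ)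
            + (∑ i ∈ Finset.Icc 2 j, (((fun i : ℕ => a (i+1)) i : ℕ) : ℚ))/2)) ^ j := hup
      _ = ((n : ℚ) + ((a 2 : ℚ) + (∑ i ∈ Finset.Icc 3 (j+1), (a i : ℚ)) / 2)) ^ (j+1-1) := by
          norm_num [reindexSum]
end

section
/- Bounds for the cumulative denumerant: Let a_1, a_2, … be positive integers, let k ≥ 1, let d = gcd(a_1,…,a_k), and set r_k = a_1 + (a_2 + ⋯ + a_k)/2 (so r_1 = a_1). Then for every natural number n, (d⌊n/d⌋ + d)^k/(k! · a_1⋯a_k) ≤ (1/(a_1⋯a_k)) · ∑_{i=0}^{k−1} [k−1 i]^a_1 · (d⌊n/d⌋ + d)^{k−i}/(k−i)! ≤ D̂^a_k(n) ≤ (d⌊n/d⌋ + r_k)^k/(k! · a_1⋯a_k), as inequalities of rational numbers. -/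
namespace BF
variable (a : ℕ → ℕ)

lemma bfAux_nonneg (r : ℕ) : ∀ (m : ℕ) (l : ℤ), 0 ≤ bfAux a r m l
  | 0, l => by rw [bfAux]; split <;> norm_num
  | m + 1, l => by
    rw [bfAux]
    split
    · exact le_rfl
    · exact add_nonneg (bfAux_nonneg r m l)
        (mul_nonneg (by positivity) (bfAux_nonneg r m (l - 1)))

lemma bfAux_neg (r : ℕ) (m : ℕ) (l : ℤ) (hl : l < 0) : bfAux a r m l = 0 := by
  cases m with
  | zero => rw [bfAux]; rw [if_neg (by omega)]
  | succ m => rw [bfAux]; rw [if_pos (Or.inl hl)]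

lemma bfAux_gt (r : ℕ) : ∀ (m : ℕ) (l : ℤ), (m : ℤ) < l → bfAux a r m l = 0
  | 0, l, h => by rw [bfAux]; rw [if_neg (by omega)]
  | m + 1, l, h => by rw [bfAux]; rw [if_pos (Or.inr (by exact_mod_cast h))]

lemma bfAux_zero (r : ℕ) : ∀ (m : ℕ), bfAux a r m 0 = 1
  | 0 => by rw [bfAux]; simp
  | m + 1 => by
    rw [bfAux, if_neg (by omega)]
    rw [bfAux_zero r m, bfAux_neg a r m (0 - 1) (by norm_num)]
    ring

lemma bfAux_rec (r : ℕ) (m : ℕ) (l : ℤ) (h0 : 0 ≤ l) (h1 : l ≤ (m : ℤ) + 1) :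
    bfAux a r (m + 1) l = bfAux a r m l + (a (m + 1 + r) : ℚ) / 2 * bfAux a r m (l - 1) := by
  rw [bfAux, if_neg (by push_cast; omega)]

/-- the polynomial lower bound -/
noncomputable def fQ (k : ℕ) (t : ℚ) : ℚ :=
  ∑ i ∈ Finset.range k, bfAux a 1 (k - 1) (i : ℤ) * t ^ (k - i) / (Nat.factorial (k - i) : ℚ)

noncomputable def FQ (k : ℕ) (t : ℚ) : ℚ :=
  ∑ i ∈ Finset.range k, bfAux a 1 (k - 1) (i : ℤ) * t ^ (k + 1 - i) / (Nat.factorial (k + 1 - i) : ℚ)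

lemma fQ_one (t : ℚ) : fQ a 1 t = t := by
  simp [fQ, bfAux_zero, Nat.factorial]

lemma fQ_succ (k : ℕ) (hk : 1 ≤ k) (t : ℚ) :
    fQ a (k + 1) t = FQ a k t + (a (k + 1) : ℚ) / 2 * fQ a k t := by
  obtain ⟨m, rfl⟩ : ∃ m, k = m + 1 := ⟨k - 1, by omega⟩
  rw [fQ]
  have hrec : ∀ i ∈ Finset.range (m + 2),
      bfAux a 1 (m + 1 + 1 - 1) (i : ℤ) * t ^ (m + 1 + 1 - i) / (Nat.factorial (m + 1 + 1 - i) : ℚ)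
      = bfAux a 1 m (i : ℤ) * t ^ (m + 2 - i) / (Nat.factorial (m + 2 - i) : ℚ)
        + (a (m + 2) : ℚ) / 2 *
          (bfAux a 1 m ((i : ℤ) - 1) * t ^ (m + 2 - i) / (Nat.factorial (m + 2 - i) : ℚ)) := by
    intro i hi
    simp only [Finset.mem_range] at hi
    have : (m + 1 + 1 - 1) = m + 1 := by omega
    rw [this, bfAux_rec a 1 m (i : ℤ) (by positivity) (by exact_mod_cast Nat.lt_succ_iff.mp hi)]
    have e2 : m + 1 + 1 - i = m + 2 - i := by omega
    rw [e2]
    ring_nf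
  rw [Finset.sum_congr rfl hrec, Finset.sum_add_distrib]
  congr 1
  · -- first sum = FQ a (m+1) t : peel top term i = m+1
    rw [Finset.sum_range_succ, bfAux_gt a 1 m (m + 1 : ℕ) (by exact_mod_cast by omega)]
    rw [FQ]
    simp only [zero_mul, zero_div, add_zero]
    apply Finset.sum_congr rfl
    intro x hx
    rw [show m + 1 - 1 = m from by omega, show m + 1 + 1 - x = m + 2 - x from by omega]
  · -- second sum = a(k+1)/2 * fQ a (m+1) t : peel bottom term i = 0
    rw [Finset.sum_range_succ', fQ, Finset.mul_sum]
    simp only [Nat.cast_zero, zero_sub]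
    rw [bfAux_neg a 1 m (-1) (by norm_num)]
    simp only [zero_mul, zero_div, mul_zero, add_zero]
    apply Finset.sum_congr rfl
    intro i hi
    simp only [Finset.mem_range] at hi
    have e1 : ((i + 1 : ℕ) : ℤ) - 1 = (i : ℤ) := by push_cast; ring
    rw [e1]
    have e2 : m + 2 - (i + 1) = m + 1 - i := by omega
    rw [e2, show m + 1 - 1 = m from by omega, show m + 1 + 1 = m + 2 from by omega]


lemma fQ_nonneg (k : ℕ) {t : ℚ} (ht : 0 ≤ t) : 0 ≤ fQ a k t := by
  apply Finset.sum_nonneg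
  intro i _
  have := bfAux_nonneg a 1 (k - 1) (i : ℤ)
  positivity

lemma FQ_nonneg (k : ℕ) {t : ℚ} (ht : 0 ≤ t) : 0 ≤ FQ a k t := by
  apply Finset.sum_nonneg
  intro i _
  have := bfAux_nonneg a 1 (k - 1) (i : ℤ)
  positivity

lemma fQ_mono (k : ℕ) {s t : ℚ} (hs : 0 ≤ s) (hst : s ≤ t) : fQ a k s ≤ fQ a k t := by
  apply Finset.sum_le_sum
  intro i _
  have h1 := bfAux_nonneg a 1 (k - 1) (i : ℤ)
  gcongr

/-- key monomial inequality for the trapezoid rule -/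
lemma pow_trapezoid (j : ℕ) {u v : ℚ} (hv : 0 ≤ v) (huv : v ≤ u) :
    2 * (u ^ (j + 1) - v ^ (j + 1)) ≤ ((j : ℚ) + 1) * (u - v) * (u ^ j + v ^ j) := by
  have hu : 0 ≤ u := hv.trans huv
  have hgeom := geom_sum₂_mul u v (j + 1)
  have hsum : 2 * (∑ i ∈ Finset.range (j + 1), u ^ i * v ^ (j + 1 - 1 - i))
      ≤ ((j : ℚ) + 1) * (u ^ j + v ^ j) := by
    have hrefl := Finset.sum_range_reflect (fun i => u ^ i * v ^ (j + 1 - 1 - i)) (j + 1)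
    calc 2 * (∑ i ∈ Finset.range (j + 1), u ^ i * v ^ (j + 1 - 1 - i))
        = (∑ i ∈ Finset.range (j + 1), u ^ (j + 1 - 1 - i) * v ^ (j + 1 - 1 - (j + 1 - 1 - i)))
          + ∑ i ∈ Finset.range (j + 1), u ^ i * v ^ (j + 1 - 1 - i) := by
          rw [hrefl]; ring
      _ = ∑ i ∈ Finset.range (j + 1),
            (u ^ (j - i) * v ^ i + u ^ i * v ^ (j - i)) := by
          rw [← Finset.sum_add_distrib]
          apply Finset.sum_congr rfl
          intro i hi
          simp only [Finset.mem_range] at hi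
          rw [show j + 1 - 1 - i = j - i from by omega]
          rw [show j + 1 - 1 - (j - i) = i from by omega]
      _ ≤ ∑ i ∈ Finset.range (j + 1), (u ^ j + v ^ j) := by
          apply Finset.sum_le_sum
          intro i hi
          simp only [Finset.mem_range] at hi
          have hij : i ≤ j := by omega
          have h1 : v ^ i ≤ u ^ i := pow_le_pow_left₀ hv huv i
          have h2 : v ^ (j - i) ≤ u ^ (j - i) := pow_le_pow_left₀ hv huv _
          have key : 0 ≤ (u ^ i - v ^ i) * (u ^ (j - i) - v ^ (j - i)) :=
            mul_nonneg (sub_nonneg.2 h1) (sub_nonneg.2 h2)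
          have eu : u ^ i * u ^ (j - i) = u ^ j := by
            rw [← pow_add]; congr 1; omega
          have ev : v ^ i * v ^ (j - i) = v ^ j := by
            rw [← pow_add]; congr 1; omega
          nlinarith [key, eu, ev]
      _ = ((j : ℚ) + 1) * (u ^ j + v ^ j) := by
          rw [Finset.sum_const, Finset.card_range]; push_cast; ring
  have huv' : 0 ≤ u - v := sub_nonneg.2 huv
  calc 2 * (u ^ (j + 1) - v ^ (j + 1))
      = (2 * ∑ i ∈ Finset.range (j + 1), u ^ i * v ^ (j + 1 - 1 - i)) * (u - v) := by
        rw [← hgeom]; ring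
    _ ≤ (((j : ℚ) + 1) * (u ^ j + v ^ j)) * (u - v) := by
        exact mul_le_mul_of_nonneg_right hsum huv'
    _ = ((j : ℚ) + 1) * (u - v) * (u ^ j + v ^ j) := by ring

/-- trapezoid rule for `fQ` / `FQ` -/
lemma trapezoid (k : ℕ) {u v : ℚ} (hv : 0 ≤ v) (huv : v ≤ u) :
    FQ a k u - FQ a k v ≤ (u - v) * (fQ a k u + fQ a k v) / 2 := by
  rw [FQ, FQ, fQ, fQ, ← Finset.sum_sub_distrib, ← Finset.sum_add_distrib]
  rw [show (u - v) * (∑ i ∈ Finset.range k,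
      (bfAux a 1 (k-1) (i:ℤ) * u ^ (k-i) / (Nat.factorial (k-i) : ℚ)
        + bfAux a 1 (k-1) (i:ℤ) * v ^ (k-i) / (Nat.factorial (k-i) : ℚ))) / 2
    = ∑ i ∈ Finset.range k, (u - v) *
      (bfAux a 1 (k-1) (i:ℤ) * u ^ (k-i) / (Nat.factorial (k-i) : ℚ)
        + bfAux a 1 (k-1) (i:ℤ) * v ^ (k-i) / (Nat.factorial (k-i) : ℚ)) / 2
    from by rw [Finset.mul_sum, Finset.sum_div]]
  apply Finset.sum_le_sum
  intro i hi
  simp only [Finset.mem_range] at hi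
  set j : ℕ := k - i with hj
  have hj1 : 1 ≤ j := by omega
  have e1 : k + 1 - i = j + 1 := by omega
  rw [e1]
  have hb := bfAux_nonneg a 1 (k - 1) (i : ℤ)
  have hfac : (Nat.factorial (j + 1) : ℚ) = ((j : ℚ) + 1) * (Nat.factorial j : ℚ) := by
    rw [Nat.factorial_succ]; push_cast; ring
  have hfj : (0:ℚ) < (Nat.factorial j : ℚ) := by positivity
  have htrap := pow_trapezoid j hv huv
  set A := bfAux a 1 (k - 1) (i : ℤ) with hA
  set F := (Nat.factorial j : ℚ) with hF
  rw [hfac, div_sub_div_same, ← add_div,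
    div_le_div_iff₀ (by positivity) (by norm_num : (0:ℚ) < 2)]
  have e : (u - v) * ((A * u ^ j + A * v ^ j) / F) * (((j:ℚ) + 1) * F)
      = ((j:ℚ) + 1) * (u - v) * (A * u ^ j + A * v ^ j) := by
    field_simp
  calc (A * u ^ (j+1) - A * v ^ (j+1)) * 2
      = A * (2 * (u ^ (j+1) - v ^ (j+1))) := by ring
    _ ≤ A * (((j:ℚ) + 1) * (u - v) * (u ^ j + v ^ j)) :=
        mul_le_mul_of_nonneg_left htrap hb
    _ = ((j:ℚ) + 1) * (u - v) * (A * u ^ j + A * v ^ j) := by ring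
    _ = (u - v) * ((A * u ^ j + A * v ^ j) / F) * (((j:ℚ) + 1) * F) := e.symm

/-- the last partial interval -/
lemma half_step (k : ℕ) {w c : ℚ} (hw : 0 ≤ w) (hwc : w ≤ c) (hk : 1 ≤ k) :
    FQ a k w ≤ c / 2 * fQ a k w := by
  rw [FQ, fQ, Finset.mul_sum]
  apply Finset.sum_le_sum
  intro i hi
  simp only [Finset.mem_range] at hi
  set j : ℕ := k - i with hj
  have hj1 : 1 ≤ j := by omega
  have e1 : k + 1 - i = j + 1 := by omega
  rw [e1]
  have hb := bfAux_nonneg a 1 (k - 1) (i : ℤ)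
  have hfac : (Nat.factorial (j + 1) : ℚ) = ((j : ℚ) + 1) * (Nat.factorial j : ℚ) := by
    rw [Nat.factorial_succ]; push_cast; ring
  have hfj : (0:ℚ) < (Nat.factorial j : ℚ) := by positivity
  have hjq : (2:ℚ) ≤ (j:ℚ) + 1 := by
    have : (1:ℚ) ≤ (j:ℚ) := by exact_mod_cast hj1
    linarith
  have hc : 0 ≤ c := hw.trans hwc
  set A := bfAux a 1 (k - 1) (i : ℤ) with hA
  set F := (Nat.factorial j : ℚ) with hF
  rw [hfac, div_le_iff₀ (by positivity)]
  have e : c / 2 * (A * w ^ j / F) * (((j:ℚ) + 1) * F)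
      = ((j:ℚ) + 1) * (c / 2) * (A * w ^ j) := by field_simp
  rw [e]
  have hAw : 0 ≤ A * w ^ j := mul_nonneg hb (pow_nonneg hw j)
  have h2 : c ≤ ((j:ℚ) + 1) * (c / 2) := by nlinarith
  calc A * w ^ (j + 1) = w * (A * w ^ j) := by ring
    _ ≤ c * (A * w ^ j) := mul_le_mul_of_nonneg_right hwc hAw
    _ ≤ (((j:ℚ) + 1) * (c / 2)) * (A * w ^ j) := mul_le_mul_of_nonneg_right h2 hAw
    _ = ((j:ℚ) + 1) * (c / 2) * (A * w ^ j) := by ring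

/-- telescoping trapezoid lower bound -/
lemma lower_sum (k : ℕ) {aq : ℚ} (haq : 0 ≤ aq) :
    ∀ (X : ℕ) (c : ℚ), 0 ≤ c - aq * X →
    FQ a k c - FQ a k (c - aq * X) + aq / 2 * (fQ a k c + fQ a k (c - aq * X))
      ≤ aq * ∑ x ∈ Finset.range (X + 1), fQ a k (c - aq * x)
  | 0, c, h => by
    simp only [Nat.cast_zero, mul_zero, sub_zero] at h ⊢
    simp [Finset.sum_range_one]
    ring_nf
    exact le_rfl
  | X + 1, c, h => by
    have haqX : (0:ℚ) ≤ aq * X := by positivity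
    have hc' : 0 ≤ (c - aq) - aq * X := by push_cast at h ⊢; linarith
    have IH := lower_sum k haq X (c - aq) hc'
    have hv : 0 ≤ c - aq := le_trans haqX (by linarith) |>.trans (le_refl _)
    have htrap := trapezoid a k (v := c - aq) (u := c) (by linarith) (by linarith)
    rw [Finset.sum_range_succ']
    have e0 : ∀ x : ℕ, c - aq * ((x : ℚ) + 1) = (c - aq) - aq * x := by intro x; ring
    have e1 : ∑ x ∈ Finset.range (X + 1), fQ a k (c - aq * ((x + 1 : ℕ) : ℚ))
        = ∑ x ∈ Finset.range (X + 1), fQ a k ((c - aq) - aq * x) := by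
      apply Finset.sum_congr rfl
      intro x _
      rw [show ((x + 1 : ℕ) : ℚ) = (x : ℚ) + 1 from by push_cast; ring, e0]
    have e2 : c - aq * ((X + 1 : ℕ) : ℚ) = (c - aq) - aq * X := by push_cast; ring
    push_cast
    push_cast at IH
    calc FQ a k c - FQ a k (c - aq * ((X:ℚ) + 1)) +
          aq / 2 * (fQ a k c + fQ a k (c - aq * ((X:ℚ) + 1)))
        = (FQ a k c - FQ a k (c - aq)) + (FQ a k (c - aq) - FQ a k ((c - aq) - aq * X)
            + aq / 2 * (fQ a k (c - aq) + fQ a k ((c - aq) - aq * X)))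
            + aq / 2 * (fQ a k c - fQ a k (c - aq)) := by
          rw [show c - aq * ((X:ℚ) + 1) = (c - aq) - aq * X from by ring]
          ring
      _ ≤ (c - (c - aq)) * (fQ a k c + fQ a k (c - aq)) / 2
            + aq * ∑ x ∈ Finset.range (X + 1), fQ a k ((c - aq) - aq * x)
            + aq / 2 * (fQ a k c - fQ a k (c - aq)) := by linarith
      _ = aq * ∑ x ∈ Finset.range (X + 1), fQ a k ((c - aq) - aq * x) + aq * fQ a k c := by
          ring
      _ = aq * (∑ x ∈ Finset.range (X + 1), fQ a k (c - aq * (↑x + 1)) + fQ a k (c - aq * (0:ℚ))) := by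
          rw [mul_zero, sub_zero, mul_add, Finset.mul_sum, Finset.mul_sum]
          congr 1
          apply Finset.sum_congr rfl
          intro x _
          rw [e0 x]

/-- midpoint inequality for monomials, with clamping at 0 -/
lemma midpoint (k : ℕ) (hk : 1 ≤ k) {t h : ℚ} (ht : 0 ≤ t) (hh : 0 ≤ h) :
    2 * ((k : ℚ) + 1) * h * t ^ k ≤ (t + h) ^ (k + 1) - (max (t - h) 0) ^ (k + 1) := by
  rcases le_or_gt h t with hht | hht
  · -- t ≥ h
    rw [max_eq_left (by linarith)]
    have hadd := add_pow t h (k + 1)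
    have hsub : (t - h) ^ (k + 1) = ∑ m ∈ Finset.range (k + 2),
        t ^ m * (-h) ^ (k + 1 - m) * ((k+1).choose m : ℚ) := by
      rw [show t - h = t + (-h) from by ring, add_pow]
    rw [hadd, hsub, ← Finset.sum_sub_distrib]
    have key : ∀ m ∈ Finset.range (k + 2),
        t ^ m * h ^ (k + 1 - m) * ((k+1).choose m : ℚ)
          - t ^ m * (-h) ^ (k + 1 - m) * ((k+1).choose m : ℚ)
        = t ^ m * h ^ (k + 1 - m) * ((k+1).choose m : ℚ) * (1 - (-1:ℚ) ^ (k + 1 - m)) := by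
      intro m _
      rw [neg_pow]
      ring
    rw [Finset.sum_congr rfl key]
    have hterm : ∀ m ∈ Finset.range (k + 2),
        0 ≤ t ^ m * h ^ (k + 1 - m) * ((k+1).choose m : ℚ) * (1 - (-1:ℚ) ^ (k + 1 - m)) := by
      intro m _
      have h1 : (0:ℚ) ≤ 1 - (-1:ℚ) ^ (k + 1 - m) := by
        rcases neg_one_pow_eq_or ℚ (k + 1 - m) with hp | hp <;> rw [hp] <;> norm_num
      positivity
    have hmem : k ∈ Finset.range (k + 2) := by simp
    have := Finset.single_le_sum hterm hmem
    refine le_trans ?_ this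
    rw [show k + 1 - k = 1 from by omega, Nat.choose_succ_self_right, pow_one]
    push_cast
    ring_nf
    exact le_rfl
  · -- t < h
    rw [max_eq_right (by linarith), zero_pow (by omega), sub_zero]
    rcases Nat.lt_or_ge k 2 with hk2 | hk2
    · interval_cases k
      norm_num
      nlinarith [sq_nonneg (t - h)]
    · obtain ⟨m, rfl⟩ : ∃ m, k = m + 2 := ⟨k - 2, by omega⟩
      have hadd := add_pow t h (m + 3)
      have hsub : ({m + 1, m + 2} : Finset ℕ) ⊆ Finset.range (m + 4) := by
        intro x hx; simp at hx ⊢; omega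
      have hnn : ∀ i ∈ Finset.range (m + 4), i ∉ ({m + 1, m + 2} : Finset ℕ) →
          0 ≤ t ^ i * h ^ (m + 3 - i) * ((m+3).choose i : ℚ) := by
        intro i _ _; positivity
      have hs := Finset.sum_le_sum_of_subset_of_nonneg hsub hnn
      have hpair : ∑ i ∈ ({m + 1, m + 2} : Finset ℕ),
          t ^ i * h ^ (m + 3 - i) * ((m+3).choose i : ℚ)
          = t ^ (m+1) * h ^ 2 * ((m+3).choose (m+1) : ℚ)
            + t ^ (m+2) * h * ((m+3).choose (m+2) : ℚ) := by
        rw [Finset.sum_pair (by omega)]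
        rw [show m + 3 - (m + 1) = 2 from by omega, show m + 3 - (m + 2) = 1 from by omega,
          pow_one]
      have hch2 : ((m+3).choose (m+2) : ℚ) = (m : ℚ) + 3 := by
        rw [Nat.choose_succ_self_right]; push_cast; ring
      have hch1 : ((m : ℚ) + 3) ≤ ((m+3).choose (m+1) : ℚ) := by
        have e : (m+3).choose (m+1) = (m+3).choose 2 := by
          rw [← Nat.choose_symm (by omega : 2 ≤ m + 3)]
          congr 1
        have h2 : m + 3 ≤ (m+3).choose (m+1) := by
          rw [e, Nat.choose_two_right]
          have h3 : (m + 3) * 2 ≤ (m + 3) * (m + 3 - 1) := Nat.mul_le_mul_left _ (by omega)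
          calc m + 3 = (m + 3) * 2 / 2 := by omega
            _ ≤ (m + 3) * (m + 3 - 1) / 2 := Nat.div_le_div_right h3
        exact_mod_cast h2
      have htp : t ^ (m + 2) * h ≤ t ^ (m + 1) * h ^ 2 := by
        have h1 : 0 ≤ t ^ (m + 1) := by positivity
        have h2 : t * h ≤ h ^ 2 := by nlinarith [mul_nonneg hh (sub_nonneg.2 hht.le)]
        calc t ^ (m + 2) * h = t ^ (m + 1) * (t * h) := by ring
          _ ≤ t ^ (m + 1) * h ^ 2 := mul_le_mul_of_nonneg_left h2 h1
      have hchoose2 : (0:ℚ) ≤ ((m+3).choose (m+1) : ℚ) := by positivity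
      rw [hadd]
      refine le_trans ?_ hs
      rw [hpair, hch2]
      have hx : 0 ≤ t ^ (m+1) * h ^ 2 := by positivity
      have h3 := mul_le_mul_of_nonneg_right hch1 hx
      have h4 := mul_le_mul_of_nonneg_left htp (by positivity : (0:ℚ) ≤ (m:ℚ) + 3)
      push_cast
      linarith [h3, h4]

/-- telescoping midpoint upper bound -/
lemma upper_sum (k : ℕ) (hk : 1 ≤ k) {aq : ℚ} (haq : 0 ≤ aq) :
    ∀ (X : ℕ) (c : ℚ), 0 ≤ c - aq * X →
    ((k : ℚ) + 1) * aq * ∑ x ∈ Finset.range (X + 1), (c - aq * x) ^ k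
      ≤ (c + aq / 2) ^ (k + 1) - (max (c - aq * X - aq / 2) 0) ^ (k + 1)
  | 0, c, h => by
    simp only [Nat.cast_zero, mul_zero, sub_zero] at h ⊢
    rw [Finset.sum_range_one]
    have := midpoint k hk h (by linarith : (0:ℚ) ≤ aq / 2)
    push_cast at this ⊢
    simp only [Nat.cast_zero, mul_zero, sub_zero]
    calc ((k:ℚ) + 1) * aq * c ^ k = 2 * ((k:ℚ) + 1) * (aq/2) * c ^ k := by ring
      _ ≤ (c + aq/2) ^ (k+1) - (max (c - aq/2) 0) ^ (k+1) := this
  | X + 1, c, h => by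
    have hc1 : 0 ≤ c - aq * ((X:ℚ) + 1) := by push_cast at h; linarith
    have hcX : 0 ≤ c - aq * X := by push_cast; linarith
    have IH := upper_sum k hk haq X c hcX
    have hmid := midpoint k hk hc1 (by linarith : (0:ℚ) ≤ aq / 2)
    rw [Finset.sum_range_succ]
    have emax : max (c - aq * X - aq / 2) 0 = c - aq * ((X:ℚ) + 1) + aq / 2 := by
      rw [max_eq_left (by linarith)]
      ring
    have emax2 : max (c - aq * ((X:ℚ) + 1) - aq / 2) 0
        = max (c - aq * ((X + 1 : ℕ):ℚ) - aq / 2) 0 := by push_cast; ring_nf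
    push_cast
    calc ((k:ℚ) + 1) * aq * (∑ x ∈ Finset.range (X + 1), (c - aq * x) ^ k
            + (c - aq * ((X:ℚ) + 1)) ^ k)
        = ((k:ℚ) + 1) * aq * ∑ x ∈ Finset.range (X + 1), (c - aq * x) ^ k
          + 2 * ((k:ℚ) + 1) * (aq / 2) * (c - aq * ((X:ℚ) + 1)) ^ k := by ring
      _ ≤ ((c + aq / 2) ^ (k+1) - (max (c - aq * X - aq / 2) 0) ^ (k+1))
          + ((c - aq * ((X:ℚ) + 1) + aq / 2) ^ (k+1)
            - (max (c - aq * ((X:ℚ) + 1) - aq / 2) 0) ^ (k+1)) := by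
          push_cast at IH
          linarith
      _ = (c + aq / 2) ^ (k+1) - (max (c - aq * ((X:ℚ) + 1) - aq / 2) 0) ^ (k+1) := by
          rw [emax]
          ring

/-- Finset version of the Dhat set -/
noncomputable def T (k n : ℕ) : Finset (Fin k → ℕ) :=
  (Fintype.piFinset fun _ => Finset.range (n + 1)).filter
    (fun x => ∑ i, a (i.1 + 1) * x i ≤ n)

variable {a}

lemma mem_T (ha : ∀ i, 1 ≤ a i) {k n : ℕ} {x : Fin k → ℕ} :
    x ∈ T a k n ↔ ∑ i, a (i.1 + 1) * x i ≤ n := by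
  unfold T
  rw [Finset.mem_filter]
  constructor
  · exact fun h => h.2
  · intro h
    refine ⟨?_, h⟩
    rw [Fintype.mem_piFinset]
    intro i
    rw [Finset.mem_range, Nat.lt_succ_iff]
    have h1 : a (i.1 + 1) * x i ≤ n :=
      le_trans (Finset.single_le_sum (f := fun j : Fin k => a (j.1 + 1) * x j)
        (fun _ _ => Nat.zero_le _) (Finset.mem_univ i)) h
    calc x i = 1 * x i := (one_mul _).symm
      _ ≤ a (i.1 + 1) * x i := Nat.mul_le_mul_right _ (ha _)
      _ ≤ n := h1

lemma Dhat_eq_T (ha : ∀ i, 1 ≤ a i) (k n : ℕ) : Dhat a k n = (T a k n).card := by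
  rw [Dhat, show {x : Fin k → ℕ | ∑ i, a (i.1 + 1) * x i ≤ n} = ↑(T a k n) from ?_,
    Set.ncard_coe_finset]
  ext x
  rw [Set.mem_setOf_eq, Finset.mem_coe, mem_T ha]

lemma Dhat_zero (ha : ∀ i, 1 ≤ a i) (n : ℕ) : Dhat a 0 n = 1 := by
  rw [Dhat_eq_T ha]
  rw [Finset.card_eq_one]
  refine ⟨fun i => 0, ?_⟩
  ext x
  simp only [Finset.mem_singleton, mem_T ha]
  constructor
  · intro _; ext i; exact absurd i.2 (by omega)
  · intro h; subst h; simp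

lemma Dhat_succ (ha : ∀ i, 1 ≤ a i) (k n : ℕ) :
    Dhat a (k + 1) n =
      ∑ t ∈ Finset.range (n / a (k + 1) + 1), Dhat a k (n - a (k + 1) * t) := by
  classical
  rw [Dhat_eq_T ha]
  have hmap : ∀ x ∈ T a (k + 1) n, x (Fin.last k) ∈ Finset.range (n / a (k + 1) + 1) := by
    intro x hx
    rw [mem_T ha] at hx
    rw [Finset.mem_range, Nat.lt_succ_iff]
    have h1 : a (k + 1) * x (Fin.last k) ≤ n := by
      refine le_trans ?_ hx
      have := Finset.single_le_sum (f := fun j : Fin (k+1) => a (j.1 + 1) * x j)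
        (fun _ _ => Nat.zero_le _) (Finset.mem_univ (Fin.last k))
      simpa using this
    exact Nat.le_div_iff_mul_le (ha (k + 1)) |>.mpr (by rw [mul_comm]; exact h1)
  rw [Finset.card_eq_sum_card_fiberwise hmap]
  apply Finset.sum_congr rfl
  intro t htmem
  rw [Finset.mem_range, Nat.lt_succ_iff] at htmem
  have hat : a (k + 1) * t ≤ n := by
    calc a (k + 1) * t ≤ a (k + 1) * (n / a (k + 1)) := Nat.mul_le_mul_left _ htmem
      _ = n / a (k + 1) * a (k + 1) := mul_comm _ _
      _ ≤ n := Nat.div_mul_le_self n (a (k + 1))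
  rw [Dhat_eq_T ha]
  -- split sum lemma
  have hsplit : ∀ x : Fin (k + 1) → ℕ,
      ∑ i : Fin (k + 1), a (i.1 + 1) * x i
        = (∑ i : Fin k, a (i.1 + 1) * Fin.init x i) + a (k + 1) * x (Fin.last k) := by
    intro x
    rw [Fin.sum_univ_castSucc]
    rfl
  symm
  apply Finset.card_bij' (fun (y : Fin k → ℕ) (_ : y ∈ T a k (n - a (k+1) * t)) =>
      (Fin.snoc y t : Fin (k+1) → ℕ))
      (fun (x : Fin (k+1) → ℕ) _ => (Fin.init x : Fin k → ℕ))
  · -- forward membership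
    intro y hy
    rw [mem_T ha] at hy
    simp only [Finset.mem_filter]
    constructor
    · rw [mem_T ha, hsplit]
      rw [Fin.init_snoc, Fin.snoc_last]
      omega
    · exact Fin.snoc_last _ _
  · -- backward membership
    intro x hx
    simp only [Finset.mem_filter] at hx
    obtain ⟨hx1, hx2⟩ := hx
    rw [mem_T ha] at hx1 ⊢
    rw [hsplit, hx2] at hx1
    omega
  · intro y _
    exact Fin.init_snoc _ _
  · intro x hx
    simp only [Finset.mem_filter] at hx
    rw [← hx.2]
    exact Fin.snoc_init_self _

lemma gcd_dvd_sum (k : ℕ) (x : Fin k → ℕ) :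
    gcdUpTo a k ∣ ∑ i, a (i.1 + 1) * x i := by
  apply Finset.dvd_sum
  intro i _
  apply Dvd.dvd.mul_right
  apply Finset.gcd_dvd
  simp only [Finset.mem_Icc]
  omega

lemma Dhat_congr (ha : ∀ i, 1 ≤ a i) (k : ℕ) {n m : ℕ}
    (h : ∀ s, gcdUpTo a k ∣ s → (s ≤ n ↔ s ≤ m)) : Dhat a k n = Dhat a k m := by
  unfold Dhat
  congr 1
  ext x
  simp only [Set.mem_setOf_eq]
  exact h _ (gcd_dvd_sum k x)

lemma gcd_pos (ha : ∀ i, 1 ≤ a i) {k : ℕ} (hk : 1 ≤ k) : 0 < gcdUpTo a k := by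
  rcases Nat.eq_zero_or_pos (gcdUpTo a k) with h | h
  · exfalso
    rw [gcdUpTo, Finset.gcd_eq_zero_iff] at h
    have := h 1 (by simp [Finset.mem_Icc]; omega)
    have := ha 1
    omega
  · exact h

lemma mult_le_iff (d s n : ℕ) (hd : 0 < d) (hs : d ∣ s) :
    (s ≤ n ↔ s ≤ d * (n / d)) ∧ (s ≤ d * (n / d) + d - 1 ↔ s ≤ d * (n / d)) := by
  obtain ⟨q, rfl⟩ := hs
  have h1 : d * q ≤ n ↔ q ≤ n / d := by
    rw [Nat.le_div_iff_mul_le hd, mul_comm]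
  have h2 : d * q ≤ d * (n / d) ↔ q ≤ n / d := by
    constructor
    · intro h; exact Nat.le_of_mul_le_mul_left h hd
    · intro h; exact Nat.mul_le_mul_left _ h
  constructor
  · rw [h1, h2]
  · rw [h2]
    constructor
    · intro h
      by_contra hq
      have hq2 : n / d + 1 ≤ q := by omega
      have : d * (n / d + 1) ≤ d * q := Nat.mul_le_mul_left _ hq2
      rw [Nat.mul_add, Nat.mul_one] at this
      omega
    · intro h
      have : d * q ≤ d * (n / d) := Nat.mul_le_mul_left _ h
      omega

lemma Dhat_one (ha : ∀ i, 1 ≤ a i) (n : ℕ) : Dhat a 1 n = n / a 1 + 1 := by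
  rw [Dhat_succ ha 0 n]
  have : ∀ t ∈ Finset.range (n / a 1 + 1), Dhat a 0 (n - a 1 * t) = 1 := by
    intro t _
    exact Dhat_zero ha _
  rw [Finset.sum_congr rfl this, Finset.sum_const, Finset.card_range, smul_eq_mul, mul_one]

lemma prodA_pos (ha : ∀ i, 1 ≤ a i) (k : ℕ) : 0 < ∏ i ∈ Finset.Icc 1 k, (a i : ℚ) := by
  apply Finset.prod_pos
  intro i _
  have := ha i
  positivity

lemma nat_div_lt (d n : ℕ) (hd : 0 < d) : n < d * (n / d) + d := by
  have h := Nat.div_add_mod n d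
  have h2 : n % d < d := Nat.mod_lt n hd
  linarith

lemma nat_div_le (d n : ℕ) : d * (n / d) ≤ n := by
  rw [mul_comm]
  exact Nat.div_mul_le_self n d

/-- main lower bound -/
lemma lower (ha : ∀ i, 1 ≤ a i) (k : ℕ) (hk : 1 ≤ k) (n : ℕ) :
    fQ a k ((n : ℚ) + 1) ≤ (∏ i ∈ Finset.Icc 1 k, (a i : ℚ)) * (Dhat a k n : ℚ) := by
  induction k, hk using Nat.le_induction generalizing n with
  | base =>
    rw [fQ_one, Dhat_one ha n, Finset.Icc_self, Finset.prod_singleton]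
    have h1 : n + 1 ≤ a 1 * (n / a 1) + a 1 := nat_div_lt (a 1) n (ha 1)
    have h2 : ((n : ℚ)) + 1 ≤ (a 1 : ℚ) * ((n / a 1 : ℕ) : ℚ) + (a 1 : ℚ) := by exact_mod_cast h1
    push_cast
    linarith
  | succ k hk IH =>
    have hA : 0 < a (k + 1) := ha _
    have hAq : (0:ℚ) < (a (k + 1) : ℚ) := by exact_mod_cast hA
    set X := n / a (k + 1) with hX
    set c : ℚ := (n : ℚ) + 1 with hc
    have hAX : a (k + 1) * X ≤ n := nat_div_le _ _
    have hAXq : ((a (k+1) : ℚ)) * (X : ℚ) ≤ (n : ℚ) := by exact_mod_cast hAX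
    have h0 : 0 ≤ c - (a (k+1) : ℚ) * X := by rw [hc]; linarith
    have hwA : c - (a (k+1) : ℚ) * X ≤ (a (k+1) : ℚ) := by
      have h1 : n + 1 ≤ a (k+1) * X + a (k+1) := nat_div_lt (a (k+1)) n hA
      have hq : (n:ℚ) + 1 ≤ (a (k+1):ℚ) * (X:ℚ) + (a (k+1):ℚ) := by exact_mod_cast h1
      rw [hc]; linarith
    have hls := lower_sum a k hAq.le X c h0
    have hhs := half_step a k h0 hwA hk
    have hrec := fQ_succ a k hk c
    set P := ∏ i ∈ Finset.Icc 1 k, (a i : ℚ) with hP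
    have hPpos : 0 < P := prodA_pos ha k
    have hsum1 : ∑ x ∈ Finset.range (X + 1), fQ a k (c - (a (k+1):ℚ) * x)
        ≤ ∑ t ∈ Finset.range (X + 1), P * (Dhat a k (n - a (k+1) * t) : ℚ) := by
      apply Finset.sum_le_sum
      intro t htm
      rw [Finset.mem_range, Nat.lt_succ_iff] at htm
      have hat : a (k+1) * t ≤ n :=
        le_trans (Nat.mul_le_mul_left _ htm) hAX
      have hcast : ((n - a (k+1) * t : ℕ) : ℚ) = (n : ℚ) - (a (k+1) : ℚ) * t := by
        push_cast [Nat.cast_sub hat]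
        ring
      have := IH (n - a (k+1) * t)
      rw [hcast] at this
      have harg : c - (a (k+1):ℚ) * t = (n : ℚ) - (a (k+1) : ℚ) * t + 1 := by rw [hc]; ring
      rw [harg]
      exact this
    rw [Finset.prod_Icc_succ_top (by omega : 1 ≤ k + 1), Dhat_succ ha k n]
    push_cast
    have hmul := mul_le_mul_of_nonneg_left hsum1 hAq.le
    have heq : (a (k+1):ℚ) * ∑ t ∈ Finset.range (X + 1), P * (Dhat a k (n - a (k+1) * t) : ℚ)
        = (P * (a (k+1):ℚ)) * ∑ t ∈ Finset.range (X + 1), (Dhat a k (n - a (k+1) * t) : ℚ) := by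
      rw [Finset.mul_sum, Finset.mul_sum]
      apply Finset.sum_congr rfl
      intro t _
      ring
    have hfq : fQ a (k + 1) ((n:ℚ) + 1)
        ≤ (a (k+1):ℚ) * ∑ x ∈ Finset.range (X + 1), fQ a k (c - (a (k+1):ℚ) * x) := by
      rw [← hc, hrec]
      linarith
    calc fQ a (k + 1) ((n:ℚ) + 1)
        ≤ (a (k+1):ℚ) * ∑ x ∈ Finset.range (X + 1), fQ a k (c - (a (k+1):ℚ) * x) := hfq
      _ ≤ (a (k+1):ℚ) * ∑ t ∈ Finset.range (X + 1), P * (Dhat a k (n - a (k+1) * t) : ℚ) := hmul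
      _ = (P * (a (k+1):ℚ)) * ∑ t ∈ Finset.range (X + 1), (Dhat a k (n - a (k+1) * t) : ℚ) := heq

/-- the r_k constant -/
noncomputable def rQ (a : ℕ → ℕ) (k : ℕ) : ℚ := (a 1 : ℚ) + (∑ i ∈ Finset.Icc 2 k, (a i : ℚ)) / 2

lemma rQ_nonneg (ha : ∀ i, 1 ≤ a i) (k : ℕ) : 0 ≤ rQ a k := by
  have h1 : (0:ℚ) ≤ (a 1 : ℚ) := by positivity
  have h2 : (0:ℚ) ≤ ∑ i ∈ Finset.Icc 2 k, (a i : ℚ) := by positivity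
  rw [rQ]
  linarith

lemma rQ_succ (k : ℕ) (hk : 1 ≤ k) : rQ a (k + 1) = rQ a k + (a (k+1) : ℚ) / 2 := by
  rw [rQ, rQ, Finset.sum_Icc_succ_top (by omega : 2 ≤ k + 1)]
  ring

/-- main upper bound -/
lemma upper (ha : ∀ i, 1 ≤ a i) (k : ℕ) (hk : 1 ≤ k) (n : ℕ) :
    (Dhat a k n : ℚ) * ((Nat.factorial k : ℚ) * ∏ i ∈ Finset.Icc 1 k, (a i : ℚ))
      ≤ ((n : ℚ) + rQ a k) ^ k := by
  induction k, hk using Nat.le_induction generalizing n with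
  | base =>
    rw [Dhat_one ha n, Finset.Icc_self, Finset.prod_singleton, Nat.factorial_one]
    rw [rQ, show Finset.Icc 2 1 = ∅ from Finset.Icc_eq_empty (by omega), Finset.sum_empty]
    have h1 : a 1 * (n / a 1) ≤ n := nat_div_le _ _
    have h2 : ((a 1:ℚ)) * ((n / a 1 : ℕ):ℚ) ≤ (n:ℚ) := by exact_mod_cast h1
    push_cast
    ring_nf
    nlinarith [h2]
  | succ k hk IH =>
    have hA : 0 < a (k + 1) := ha _
    have hAq : (0:ℚ) < (a (k + 1) : ℚ) := by exact_mod_cast hA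
    set X := n / a (k + 1) with hX
    set c : ℚ := (n : ℚ) + rQ a k with hc
    have hAX : a (k + 1) * X ≤ n := nat_div_le _ _
    have hAXq : ((a (k+1) : ℚ)) * (X : ℚ) ≤ (n : ℚ) := by exact_mod_cast hAX
    have hr0 : 0 ≤ rQ a k := rQ_nonneg ha k
    have h0 : 0 ≤ c - (a (k+1) : ℚ) * X := by rw [hc]; linarith
    have hus := upper_sum k hk hAq.le X c h0
    set P := ∏ i ∈ Finset.Icc 1 k, (a i : ℚ) with hP
    have hPpos : 0 < P := prodA_pos ha k
    have hsum1 : ∑ t ∈ Finset.range (X + 1),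
          (Dhat a k (n - a (k+1) * t) : ℚ) * ((Nat.factorial k : ℚ) * P)
        ≤ ∑ x ∈ Finset.range (X + 1), (c - (a (k+1):ℚ) * x) ^ k := by
      apply Finset.sum_le_sum
      intro t htm
      rw [Finset.mem_range, Nat.lt_succ_iff] at htm
      have hat : a (k+1) * t ≤ n :=
        le_trans (Nat.mul_le_mul_left _ htm) hAX
      have hcast : ((n - a (k+1) * t : ℕ) : ℚ) = (n : ℚ) - (a (k+1) : ℚ) * t := by
        push_cast [Nat.cast_sub hat]
        ring
      have := IH (n - a (k+1) * t)
      rw [hcast] at this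
      have harg : c - (a (k+1):ℚ) * t = (n : ℚ) - (a (k+1) : ℚ) * t + rQ a k := by
        rw [hc]; ring
      rw [harg]
      exact this
    have hmax : (0:ℚ) ≤ (max (c - (a (k+1):ℚ) * X - (a (k+1):ℚ)/2) 0) ^ (k+1) :=
      pow_nonneg (le_max_right _ _) _
    rw [Dhat_succ ha k n, Finset.prod_Icc_succ_top (by omega : 1 ≤ k + 1),
      Nat.factorial_succ]
    push_cast
    have heq : (∑ t ∈ Finset.range (X + 1), (Dhat a k (n - a (k+1) * t) : ℚ))
          * (((k:ℚ)+1) * (Nat.factorial k : ℚ) * (P * (a (k+1):ℚ)))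
        = ((k:ℚ)+1) * (a (k+1):ℚ) * ∑ t ∈ Finset.range (X + 1),
            (Dhat a k (n - a (k+1) * t) : ℚ) * ((Nat.factorial k : ℚ) * P) := by
      rw [Finset.sum_mul, Finset.mul_sum]
      apply Finset.sum_congr rfl
      intro t _
      ring
    have hre : c + (a (k+1):ℚ)/2 = (n:ℚ) + rQ a (k+1) := by
      rw [hc, rQ_succ k hk]
      ring
    have hmul := mul_le_mul_of_nonneg_left hsum1
      (by positivity : (0:ℚ) ≤ ((k:ℚ)+1) * (a (k+1):ℚ))
    calc (∑ t ∈ Finset.range (X + 1), (Dhat a k (n - a (k+1) * t) : ℚ))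
          * (((k:ℚ)+1) * (Nat.factorial k : ℚ) * (P * (a (k+1):ℚ)))
        = ((k:ℚ)+1) * (a (k+1):ℚ) * ∑ t ∈ Finset.range (X + 1),
            (Dhat a k (n - a (k+1) * t) : ℚ) * ((Nat.factorial k : ℚ) * P) := heq
      _ ≤ ((k:ℚ)+1) * (a (k+1):ℚ) *
            ∑ x ∈ Finset.range (X + 1), (c - (a (k+1):ℚ) * x) ^ k := hmul
      _ ≤ (c + (a (k+1):ℚ)/2) ^ (k+1)
            - (max (c - (a (k+1):ℚ) * X - (a (k+1):ℚ)/2) 0) ^ (k+1) := hus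
      _ ≤ (c + (a (k+1):ℚ)/2) ^ (k+1) := by linarith
      _ = ((n:ℚ) + rQ a (k+1)) ^ (k+1) := by rw [hre]

end BF

/-- Bounds for the cumulative denumerant. -/
theorem dhat_bounds (a : ℕ → ℕ) (ha : ∀ i, 1 ≤ a i) (k : ℕ) (hk : 1 ≤ k) (n : ℕ) :
    ((gcdUpTo a k * (n / gcdUpTo a k) + gcdUpTo a k : ℕ) : ℚ) ^ k /
        ((Nat.factorial k : ℚ) * ∏ i ∈ Finset.Icc 1 k, (a i : ℚ)) ≤
      (1 / ∏ i ∈ Finset.Icc 1 k, (a i : ℚ)) *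
        ∑ i ∈ Finset.range k,
          bf a 1 ((k : ℤ) - 1) (i : ℤ) *
            ((gcdUpTo a k * (n / gcdUpTo a k) + gcdUpTo a k : ℕ) : ℚ) ^ (k - i) /
              (Nat.factorial (k - i) : ℚ)
    ∧ (1 / ∏ i ∈ Finset.Icc 1 k, (a i : ℚ)) *
        ∑ i ∈ Finset.range k,
          bf a 1 ((k : ℤ) - 1) (i : ℤ) *
            ((gcdUpTo a k * (n / gcdUpTo a k) + gcdUpTo a k : ℕ) : ℚ) ^ (k - i) /
              (Nat.factorial (k - i) : ℚ)
      ≤ (Dhat a k n : ℚ)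
    ∧ (Dhat a k n : ℚ) ≤
        (((gcdUpTo a k * (n / gcdUpTo a k) : ℕ) : ℚ) +
            ((a 1 : ℚ) + (∑ i ∈ Finset.Icc 2 k, (a i : ℚ)) / 2)) ^ k /
          ((Nat.factorial k : ℚ) * ∏ i ∈ Finset.Icc 1 k, (a i : ℚ)) := by
  have hd : 0 < gcdUpTo a k := BF.gcd_pos ha hk
  set d := gcdUpTo a k with hdd
  set N : ℕ := d * (n / d) with hN
  set t : ℚ := ((N + d : ℕ) : ℚ) with ht
  set P : ℚ := ∏ i ∈ Finset.Icc 1 k, (a i : ℚ) with hP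
  have hPpos : 0 < P := BF.prodA_pos ha k
  have hfpos : (0:ℚ) < (Nat.factorial k : ℚ) := by positivity
  have hbf : ∀ i : ℕ, bf a 1 ((k:ℤ) - 1) (i:ℤ) = bfAux a 1 (k - 1) (i:ℤ) := by
    intro i
    rw [bf, if_neg (by omega)]
    congr 1
    omega
  have hsum : ∑ i ∈ Finset.range k,
      bf a 1 ((k:ℤ) - 1) (i:ℤ) * t ^ (k - i) / (Nat.factorial (k - i) : ℚ)
      = BF.fQ a k t := by
    rw [BF.fQ]
    exact Finset.sum_congr rfl (fun i _ => by rw [hbf i])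
  have ht0 : (0:ℚ) ≤ t := by positivity
  refine ⟨?_, ?_, ?_⟩
  · -- first inequality
    rw [hsum]
    have hterm : t ^ k / (Nat.factorial k : ℚ) ≤ BF.fQ a k t := by
      have hmem : 0 ∈ Finset.range k := by simp; omega
      have hnn : ∀ i ∈ Finset.range k,
          0 ≤ bfAux a 1 (k - 1) (i:ℤ) * t ^ (k - i) / (Nat.factorial (k - i) : ℚ) := by
        intro i _
        have hb := BF.bfAux_nonneg a 1 (k - 1) (i:ℤ)
        positivity
      have := Finset.single_le_sum hnn hmem
      rw [BF.fQ]
      refine le_trans (le_of_eq ?_) this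
      rw [Nat.cast_zero, BF.bfAux_zero, Nat.sub_zero, one_mul]
    have heq : t ^ k / ((Nat.factorial k : ℚ) * P)
        = (1 / P) * (t ^ k / (Nat.factorial k : ℚ)) := by
      field_simp
    rw [heq]
    exact mul_le_mul_of_nonneg_left hterm (by positivity)
  · -- second inequality
    rw [hsum]
    have hcongr : Dhat a k n = Dhat a k (N + d - 1) := by
      apply BF.Dhat_congr ha k
      intro s hs
      have h2 := BF.mult_le_iff d s n hd hs
      rw [h2.1, ← h2.2]
    have hlow := BF.lower ha k hk (N + d - 1)
    have hcast : ((N + d - 1 : ℕ) : ℚ) + 1 = t := by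
      rw [ht, show N + d = N + d - 1 + 1 from by omega]
      push_cast
      ring
    rw [hcast] at hlow
    rw [hcongr]
    calc (1 / P) * BF.fQ a k t ≤ (1 / P) * (P * (Dhat a k (N + d - 1) : ℚ)) :=
        mul_le_mul_of_nonneg_left hlow (by positivity)
      _ = (Dhat a k (N + d - 1) : ℚ) := by field_simp
  · -- third inequality
    have hcongr : Dhat a k n = Dhat a k N := by
      apply BF.Dhat_congr ha k
      intro s hs
      exact (BF.mult_le_iff d s n hd hs).1
    have hup := BF.upper ha k hk N
    rw [hcongr, show (a 1 : ℚ) + (∑ i ∈ Finset.Icc 2 k, (a i : ℚ)) / 2 = BF.rQ a k from rfl]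
    rw [← hP] at hup
    rw [le_div_iff₀ (by positivity : (0:ℚ) < (Nat.factorial k : ℚ) * P)]
    exact hup
end

section
/- Brauer's bound on representability: Let a_1, a_2, … be positive integers and let k ≥ 2 satisfy gcd(a_1,…,a_k) = 1. Set T = ∑_{i=1}^{k−1} a_{i+1} d_i / d_{i+1}, where d_i = gcd(a_1,…,a_i). Then every natural number n with n > T − (a_1 + ⋯ + a_k) is representable: there exist natural numbers x_1,…,x_k with a_1 x_1 + ⋯ + a_k x_k = n. In particular the Frobenius number of {a_1,…,a_k} is at most T − (a_1 + ⋯ + a_k). -/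
lemma gcdUpTo_dvd (a : ℕ → ℕ) {i j : ℕ} (h1 : 1 ≤ j) (h2 : j ≤ i) : gcdUpTo a i ∣ a j :=
  Finset.gcd_dvd (Finset.mem_Icc.2 ⟨h1, h2⟩)

lemma gcdUpTo_pos (a : ℕ → ℕ) (ha : ∀ i, 1 ≤ a i) (i : ℕ) (hi : 1 ≤ i) :
    0 < gcdUpTo a i :=
  Nat.pos_of_dvd_of_pos (gcdUpTo_dvd a le_rfl hi) (ha 1)

lemma gcdUpTo_succ (a : ℕ → ℕ) (k : ℕ) (hk : 1 ≤ k) :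
    gcdUpTo a (k+1) = Nat.gcd (a (k+1)) (gcdUpTo a k) := by
  unfold gcdUpTo
  rw [← Finset.insert_Icc_right_eq_Icc_add_one (by omega), Finset.gcd_insert]
  rfl

lemma key : ∀ (k : ℕ), 1 ≤ k → ∀ (a : ℕ → ℕ), (∀ i, 1 ≤ a i) → gcdUpTo a k = 1 →
    ∀ N : ℤ,
    ((∑ i ∈ Finset.Icc 1 (k-1), a (i+1) * (gcdUpTo a i / gcdUpTo a (i+1)) : ℕ) : ℤ)
      - ∑ i ∈ Finset.Icc 1 k, (a i : ℤ) < N →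
    ∃ x : Fin k → ℕ, ((∑ i, a (i.1+1) * x i : ℕ) : ℤ) = N := by
  intro k
  induction k with
  | zero => omega
  | succ k ih =>
    intro _ a ha hgcd N hN
    rcases Nat.eq_zero_or_pos k with hk0 | hk1
    · subst hk0
      -- base case k = 1
      have ha1 : a 1 = 1 := by
        have h1 : a 1 ∣ gcdUpTo a 1 := by
          refine Finset.dvd_gcd fun j hj => ?_
          have : j = 1 := by simp [Finset.mem_Icc] at hj; omega
          rw [this]
        rw [hgcd] at h1
        exact Nat.dvd_one.1 h1
      have hN' : (0:ℤ) ≤ N := by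
        simp [Finset.Icc_eq_empty_of_lt, ha1] at hN
        omega
      refine ⟨fun _ => N.toNat, ?_⟩
      simp [ha1]
      omega
    · -- inductive step, total count k+1 with k ≥ 1
      set d := gcdUpTo a k with hd_def
      have hd : 0 < d := gcdUpTo_pos a ha k hk1
      have hcop : Nat.Coprime (a (k+1)) d := by
        have := gcdUpTo_succ a k hk1
        rw [hgcd] at this
        exact this.symm
      set b : ℕ → ℕ := fun i => if 1 ≤ i ∧ i ≤ k then a i / d else 1 with hb_def
      have hab : ∀ j ∈ Finset.Icc 1 k, a j = d * b j := by
        intro j hj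
        rw [Finset.mem_Icc] at hj
        simp only [hb_def, hj.1, hj.2, and_self, if_true]
        exact (Nat.mul_div_cancel' (gcdUpTo_dvd a hj.1 hj.2)).symm
      have hb : ∀ i, 1 ≤ b i := by
        intro i
        by_cases h : 1 ≤ i ∧ i ≤ k
        · simp only [hb_def, h, if_true]
          exact (Nat.one_le_div_iff hd).2 (Nat.le_of_dvd (ha i) (gcdUpTo_dvd a h.1 h.2))
        · simp [hb_def, h]
      have he : ∀ i, i ≤ k → d * gcdUpTo b i = gcdUpTo a i := by
        intro i hi
        have : gcdUpTo a i = (Finset.Icc 1 i).gcd (fun j => d * b j) := by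
          refine Finset.gcd_congr rfl fun j hj => ?_
          rw [Finset.mem_Icc] at hj
          exact hab j (Finset.mem_Icc.2 ⟨hj.1, hj.2.trans hi⟩)
        rw [this, Finset.gcd_mul_left]
        simp [gcdUpTo]
      have hgb : gcdUpTo b k = 1 := by
        have h1 := he k le_rfl
        rw [← hd_def] at h1
        have : d * gcdUpTo b k = d * 1 := by omega
        exact Nat.eq_of_mul_eq_mul_left hd this
      -- choose x0 with a(k+1) * x0 ≡ N [ZMOD d]
      haveI : NeZero d := ⟨hd.ne'⟩
      set u : ZMod d := (N : ZMod d) * (a (k+1) : ZMod d)⁻¹ with hu_def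
      set x0 : ℕ := u.val with hx0_def
      have hx0 : x0 < d := ZMod.val_lt u
      have hunit : IsUnit ((a (k+1) : ZMod d)) := (ZMod.isUnit_iff_coprime _ _).2 hcop
      have hcong : ((a (k+1) : ZMod d)) * (x0 : ZMod d) = (N : ZMod d) := by
        rw [hx0_def, ZMod.natCast_rightInverse u, hu_def, mul_comm, mul_assoc,
          ZMod.inv_mul_of_unit _ hunit, mul_one]
      have hdvd : (d:ℤ) ∣ N - (a (k+1) : ℤ) * (x0 : ℤ) := by
        have h0 : ((N - (a (k+1) : ℤ) * (x0 : ℤ) : ℤ) : ZMod d) = 0 := by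
          push_cast
          rw [hcong]
          ring
        exact (ZMod.intCast_zmod_eq_zero_iff_dvd _ _).1 h0
      set M : ℤ := (N - (a (k+1) : ℤ) * (x0 : ℤ)) / d with hM_def
      have hdM : (d:ℤ) * M = N - (a (k+1) : ℤ) * (x0 : ℤ) := Int.mul_ediv_cancel' hdvd
      -- rewrite hypothesis sums
      obtain ⟨m, rfl⟩ : ∃ m, k = m + 1 := ⟨k - 1, by omega⟩
      set k' := m + 1 with hk'_def
      have hTsplit : ∑ i ∈ Finset.Icc 1 k', a (i+1) * (gcdUpTo a i / gcdUpTo a (i+1))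
          = (∑ i ∈ Finset.Icc 1 m, a (i+1) * (gcdUpTo a i / gcdUpTo a (i+1)))
            + a (k'+1) * d := by
        rw [Finset.sum_Icc_succ_top (by omega)]
        rw [hgcd, ← hd_def, Nat.div_one]
      have hTb : ∑ i ∈ Finset.Icc 1 m, a (i+1) * (gcdUpTo a i / gcdUpTo a (i+1))
          = d * ∑ i ∈ Finset.Icc 1 m, b (i+1) * (gcdUpTo b i / gcdUpTo b (i+1)) := by
        rw [Finset.mul_sum]
        refine Finset.sum_congr rfl fun i hi => ?_
        rw [Finset.mem_Icc] at hi
        have hi1 : i ≤ k' := by omega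
        have hi2 : i + 1 ≤ k' := by omega
        rw [← he i hi1, ← he (i+1) hi2, Nat.mul_div_mul_left _ _ hd,
          hab (i+1) (Finset.mem_Icc.2 ⟨by omega, hi2⟩)]
        ring
      have hSb : ∑ i ∈ Finset.Icc 1 k', a i = d * ∑ i ∈ Finset.Icc 1 k', b i := by
        rw [Finset.mul_sum]
        exact Finset.sum_congr rfl hab
      have hSsplit : ∑ i ∈ Finset.Icc 1 (k'+1), (a i : ℤ)
          = (∑ i ∈ Finset.Icc 1 k', (a i : ℤ)) + (a (k'+1) : ℤ) := by
        rw [Finset.sum_Icc_succ_top (by omega)]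
      -- the inequality for the induction hypothesis
      have hx0le : (a (k'+1) : ℤ) * (x0 : ℤ) ≤ (a (k'+1) : ℤ) * ((d : ℤ) - 1) := by
        refine mul_le_mul_of_nonneg_left ?_ (by positivity)
        have : (x0 : ℤ) < d := by exact_mod_cast hx0
        omega
      have hMineq :
          ((∑ i ∈ Finset.Icc 1 (k'-1), b (i+1) * (gcdUpTo b i / gcdUpTo b (i+1)) : ℕ) : ℤ)
            - ∑ i ∈ Finset.Icc 1 k', (b i : ℤ) < M := by
        have h1 : (d:ℤ) * (((∑ i ∈ Finset.Icc 1 (k'-1),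
            b (i+1) * (gcdUpTo b i / gcdUpTo b (i+1)) : ℕ) : ℤ)
              - ∑ i ∈ Finset.Icc 1 k', (b i : ℤ)) < (d:ℤ) * M := by
          rw [hdM]
          have e1 : (d:ℤ) * ((∑ i ∈ Finset.Icc 1 (k'-1),
              b (i+1) * (gcdUpTo b i / gcdUpTo b (i+1)) : ℕ) : ℤ)
              = ((∑ i ∈ Finset.Icc 1 m, a (i+1) * (gcdUpTo a i / gcdUpTo a (i+1)) : ℕ) : ℤ) := by
            have : k' - 1 = m := by omega
            rw [this, hTb]
            push_cast
            ring
          have e2 : (d:ℤ) * (∑ i ∈ Finset.Icc 1 k', (b i : ℤ))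
              = (∑ i ∈ Finset.Icc 1 k', (a i : ℤ)) := by
            have h := congrArg (fun t : ℕ => (t : ℤ)) hSb
            push_cast at h
            linarith [h]
          have hN' := hN
          rw [show k' + 1 - 1 = k' from rfl] at hN'
          rw [hTsplit] at hN'
          rw [hSsplit] at hN'
          push_cast at hN' e1 e2 ⊢
          nlinarith [hx0le]
        have hdpos : (0:ℤ) < d := by exact_mod_cast hd
        exact lt_of_mul_lt_mul_left h1 (le_of_lt hdpos)
      obtain ⟨y, hy⟩ := ih hk1 b hb hgb M hMineq
      refine ⟨Fin.snoc y x0, ?_⟩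
      rw [Fin.sum_univ_castSucc]
      have hlast : (Fin.snoc y x0 : Fin (k'+1) → ℕ) (Fin.last k') = x0 := Fin.snoc_last _ _
      have hsum : ∑ i : Fin k', a (i.1 + 1) * (Fin.snoc y x0 : Fin (k'+1) → ℕ) i.castSucc
          = d * ∑ i : Fin k', b (i.1 + 1) * y i := by
        rw [Finset.mul_sum]
        refine Finset.sum_congr rfl fun i _ => ?_
        rw [Fin.snoc_castSucc]
        have hmem : i.1 + 1 ∈ Finset.Icc 1 k' := Finset.mem_Icc.2 ⟨by omega, by omega⟩
        rw [hab _ hmem]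
        ring
      have hfin : ((∑ i : Fin k', a (i.1+1) * (Fin.snoc y x0 : Fin (k'+1) → ℕ) i.castSucc : ℕ) : ℤ)
          = (d:ℤ) * M := by
        calc ((∑ i : Fin k', a (i.1+1) * (Fin.snoc y x0 : Fin (k'+1) → ℕ) i.castSucc : ℕ) : ℤ)
            = ((d * ∑ i : Fin k', b (i.1+1) * y i : ℕ) : ℤ) := by exact_mod_cast hsum
          _ = (d:ℤ) * ((∑ i : Fin k', b (i.1+1) * y i : ℕ) : ℤ) := by push_cast; ring
          _ = (d:ℤ) * M := by rw [hy]
      simp only [Fin.coe_castSucc, Fin.val_last, Fin.snoc_last]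
      rw [Nat.cast_add, hfin]
      push_cast
      linarith [hdM]


/-- Brauer's bound on representability. -/
theorem brauer_bound (a : ℕ → ℕ) (ha : ∀ i, 1 ≤ a i) (k : ℕ) (hk : 2 ≤ k)
    (hgcd : gcdUpTo a k = 1) (n : ℕ)
    (hn : ((∑ i ∈ Finset.Icc 1 (k - 1), a (i + 1) * (gcdUpTo a i / gcdUpTo a (i + 1)) : ℕ) : ℤ)
        - ∑ i ∈ Finset.Icc 1 k, (a i : ℤ) < (n : ℤ)) :
    ∃ x : Fin k → ℕ, ∑ i, a (i.1 + 1) * x i = n := by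
  obtain ⟨x, hx⟩ := key k (by omega) a ha hgcd n hn
  exact ⟨x, by exact_mod_cast hx⟩
end

section
/- Lower bound for the Frobenius number via the cumulative denumerant: Let a_1, a_2, … be positive integers, let k ≥ 1 satisfy gcd(a_1,…,a_k) = 1, and set r_k = a_1 + (a_2 + ⋯ + a_k)/2. If a natural number n satisfies (n + r_k)^k ≤ k! · a_1 a_2 ⋯ a_k (as rationals), then D̂^a_k(n) = 1; that is, the only tuple (x_1,…,x_k) of natural numbers with a_1 x_1 + ⋯ + a_k x_k ≤ n is the zero tuple, so no positive integer m ≤ n is representable as a nonnegative integer combination of a_1,…,a_k. -/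
private lemma binom3 (u M : ℚ) (hu : 0 ≤ u) (hM : 0 ≤ M) :
    ∀ k : ℕ, u^(k+2) + ((k:ℚ)+2)*(M/2)*u^(k+1) + (((k:ℚ)+2)*((k:ℚ)+1)/2)*(M/2)^2*u^k
      ≤ (u + M/2)^(k+2) := by
  intro k
  induction k with
  | zero =>
    have hid : (u + M/2)^(0+2)
        = u^(0+2) + (((0:ℕ):ℚ)+2)*(M/2)*u^(0+1) + ((((0:ℕ):ℚ)+2)*(((0:ℕ):ℚ)+1)/2)*(M/2)^2*u^0 := by
      push_cast; ring
    linarith [hid.ge, hid.le]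
  | succ k ih =>
    have hx : (0:ℚ) ≤ u + M/2 := by linarith
    have h1 : (u^(k+2) + ((k:ℚ)+2)*(M/2)*u^(k+1) + (((k:ℚ)+2)*((k:ℚ)+1)/2)*(M/2)^2*u^k) * (u + M/2)
        ≤ (u + M/2)^(k+1+2) := by
      calc (u^(k+2) + ((k:ℚ)+2)*(M/2)*u^(k+1) + (((k:ℚ)+2)*((k:ℚ)+1)/2)*(M/2)^2*u^k) * (u + M/2)
          ≤ (u + M/2)^(k+2) * (u + M/2) := mul_le_mul_of_nonneg_right ih hx
        _ = (u + M/2)^(k+1+2) := (pow_succ _ _).symm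
    have hid : (u^(k+2) + ((k:ℚ)+2)*(M/2)*u^(k+1) + (((k:ℚ)+2)*((k:ℚ)+1)/2)*(M/2)^2*u^k) * (u + M/2)
        = u^(k+1+2) + ((k:ℚ)+3)*(M/2)*u^(k+1+1) + (((k:ℚ)+3)*((k:ℚ)+2)/2)*(M/2)^2*u^(k+1)
          + (((k:ℚ)+2)*((k:ℚ)+1)/2)*(M/2)^3*u^k := by ring
    have hd : 0 ≤ (((k:ℚ)+2)*((k:ℚ)+1)/2)*(M/2)^3*u^k := by
      apply mul_nonneg (mul_nonneg (by positivity) (by positivity)) (pow_nonneg hu k)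
    push_cast
    linarith

private lemma key_pow (p : ℕ) (u M : ℚ) (hu : 0 ≤ u) (hM : 0 ≤ M) :
    ((p:ℚ)+2)*M*u^(p+1) ≤ (u + M/2)^(p+2) := by
  have hb := binom3 u M hu hM p
  have hfac : u^(p+2) + (((p:ℚ)+2)*((p:ℚ)+1)/2)*(M/2)^2*u^p - ((p:ℚ)+2)*(M/2)*u^(p+1)
      = (u - ((p:ℚ)+2)*M/4)^2 * u^p + ((p:ℚ)*((p:ℚ)+2)/16)*M^2*u^p := by ring
  have h1 : 0 ≤ (u - ((p:ℚ)+2)*M/4)^2 * u^p := mul_nonneg (sq_nonneg _) (pow_nonneg hu p)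
  have h2 : 0 ≤ ((p:ℚ)*((p:ℚ)+2)/16)*M^2*u^p :=
    mul_nonneg (mul_nonneg (by positivity) (sq_nonneg _)) (pow_nonneg hu p)
  linarith

private lemma fact_prod_lt (a : ℕ → ℚ) : ∀ (n : ℕ) (s : Finset ℕ) (i₀ : ℕ), s.card = n →
    i₀ ∈ s → (∀ i ∈ s, a i₀ ≤ a i) → 0 < a i₀ →
    ((s.card).factorial : ℚ) * ∏ i ∈ s, a i < ((∑ i ∈ s, a i)/2 + 3*(a i₀)/2)^s.card := by
  intro n
  induction n with
  | zero =>
    intro s i₀ hc hi _ _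
    rw [Finset.card_eq_zero] at hc; subst hc; simp at hi
  | succ n ih =>
    intro s i₀ hc hi hlb hpos
    by_cases h1 : s = {i₀}
    · subst h1
      simp only [Finset.card_singleton, Finset.prod_singleton, Finset.sum_singleton,
        Nat.factorial_one, Nat.cast_one, one_mul, pow_one]
      linarith
    · obtain ⟨j, hjs, hji⟩ : ∃ j ∈ s, j ≠ i₀ := by
        by_contra hcon; push_neg at hcon
        exact h1 (Finset.eq_singleton_iff_unique_mem.mpr ⟨hi, fun x hx => hcon x hx⟩)
      have hi' : i₀ ∈ s.erase j := Finset.mem_erase.mpr ⟨Ne.symm hji, hi⟩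
      have hc' : (s.erase j).card = n := by
        rw [Finset.card_erase_of_mem hjs, hc]; omega
      have hIH := ih (s.erase j) i₀ hc' hi'
        (fun i hi2 => hlb i (Finset.mem_of_mem_erase hi2)) hpos
      obtain ⟨p, rfl⟩ : ∃ p, n = p + 1 := by
        have : 1 ≤ n := hc' ▸ Finset.card_pos.mpr ⟨i₀, hi'⟩
        exact ⟨n - 1, by omega⟩
      rw [hc'] at hIH
      have hprodpos : 0 < ∏ i ∈ s.erase j, a i :=
        Finset.prod_pos (fun i hi2 => lt_of_lt_of_le hpos (hlb i (Finset.mem_of_mem_erase hi2)))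
      have hsum' : 0 ≤ ∑ i ∈ s.erase j, a i :=
        Finset.sum_nonneg (fun i hi2 => le_of_lt (lt_of_lt_of_le hpos (hlb i (Finset.mem_of_mem_erase hi2))))
      have hM : 0 < a j := lt_of_lt_of_le hpos (hlb j hjs)
      have hu : 0 ≤ (∑ i ∈ s.erase j, a i)/2 + 3*(a i₀)/2 := by linarith
      have hkey := key_pow p ((∑ i ∈ s.erase j, a i)/2 + 3*(a i₀)/2) (a j) hu (le_of_lt hM)
      have hprod : ∏ i ∈ s, a i = a j * ∏ i ∈ s.erase j, a i := (Finset.mul_prod_erase s a hjs).symm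
      have hsum : ∑ i ∈ s, a i = a j + ∑ i ∈ s.erase j, a i := (Finset.add_sum_erase s a hjs).symm
      rw [hc, hprod, hsum]
      have hfact : ((p+2).factorial : ℚ) = ((p:ℚ)+2) * ((p+1).factorial : ℚ) := by
        rw [Nat.factorial_succ]; push_cast; ring
      have hstep : ((p+2).factorial : ℚ) * (a j * ∏ i ∈ s.erase j, a i)
          < ((p:ℚ)+2) * a j * (((∑ i ∈ s.erase j, a i)/2 + 3*(a i₀)/2)^(p+1)) := by
        rw [hfact]
        have hpos2 : 0 < ((p:ℚ)+2) * a j := by positivity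
        calc ((p:ℚ)+2) * ((p+1).factorial : ℚ) * (a j * ∏ i ∈ s.erase j, a i)
            = ((p:ℚ)+2) * a j * (((p+1).factorial : ℚ) * ∏ i ∈ s.erase j, a i) := by ring
          _ < ((p:ℚ)+2) * a j * (((∑ i ∈ s.erase j, a i)/2 + 3*(a i₀)/2)^(p+1)) :=
              (mul_lt_mul_iff_right₀ hpos2).mpr hIH
      have hfin : ((a j + ∑ i ∈ s.erase j, a i)/2 + 3*(a i₀)/2)
          = ((∑ i ∈ s.erase j, a i)/2 + 3*(a i₀)/2) + (a j)/2 := by ring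
      rw [hfin]
      calc ((p+2).factorial : ℚ) * (a j * ∏ i ∈ s.erase j, a i)
          < ((p:ℚ)+2) * a j * (((∑ i ∈ s.erase j, a i)/2 + 3*(a i₀)/2)^(p+1)) := hstep
        _ ≤ (((∑ i ∈ s.erase j, a i)/2 + 3*(a i₀)/2) + (a j)/2)^(p+2) := hkey

/-- Lower bound for the Frobenius number via the cumulative denumerant. -/
theorem frobenius_lower_bound (a : ℕ → ℕ) (ha : ∀ i, 1 ≤ a i) (k : ℕ) (hk : 1 ≤ k)
    (hgcd : gcdUpTo a k = 1) (n : ℕ)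
    (h : ((n : ℚ) + ((a 1 : ℚ) + (∑ i ∈ Finset.Icc 2 k, (a i : ℚ)) / 2)) ^ k ≤
      (Nat.factorial k : ℚ) * ∏ i ∈ Finset.Icc 1 k, (a i : ℚ)) :
    Dhat a k n = 1 := by
  have key : ∀ j ∈ Finset.Icc 1 k, n < a j := by
    by_contra hcon
    push_neg at hcon
    obtain ⟨j, hjmem, hjn⟩ := hcon
    have hne : (Finset.Icc 1 k).Nonempty := ⟨1, Finset.mem_Icc.mpr ⟨le_refl 1, hk⟩⟩
    obtain ⟨i₀, hi₀, hmin⟩ := Finset.exists_min_image (Finset.Icc 1 k) (fun i => (a i : ℚ)) hne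
    have hcard : (Finset.Icc 1 k).card = k := by
      rw [Nat.card_Icc]; omega
    have hpos : (0:ℚ) < (a i₀ : ℚ) := by exact_mod_cast ha i₀
    have hF := fact_prod_lt (fun i => (a i : ℚ)) (Finset.Icc 1 k).card (Finset.Icc 1 k) i₀ rfl
      hi₀ hmin hpos
    rw [hcard] at hF
    have h1mem : (1:ℕ) ∈ Finset.Icc 1 k := Finset.mem_Icc.mpr ⟨le_refl 1, hk⟩
    have hsplit : ∑ i ∈ Finset.Icc 1 k, (a i : ℚ) = (a 1 : ℚ) + ∑ i ∈ Finset.Icc 2 k, (a i : ℚ) := by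
      have hins : Finset.Icc 1 k = insert 1 (Finset.Icc 2 k) := by
        ext x; simp only [Finset.mem_Icc, Finset.mem_insert]; omega
      rw [hins, Finset.sum_insert (by simp [Finset.mem_Icc])]
    have hm1 : (a i₀ : ℚ) ≤ (a 1 : ℚ) := hmin 1 h1mem
    have hmj : (a i₀ : ℚ) ≤ (a j : ℚ) := hmin j hjmem
    have hjn' : (a j : ℚ) ≤ (n : ℚ) := by exact_mod_cast hjn
    have hle : (∑ i ∈ Finset.Icc 1 k, (a i : ℚ))/2 + 3*(a i₀ : ℚ)/2
        ≤ (n : ℚ) + ((a 1 : ℚ) + (∑ i ∈ Finset.Icc 2 k, (a i : ℚ)) / 2) := by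
      rw [hsplit]; linarith
    have hsumnn : (0:ℚ) ≤ ∑ i ∈ Finset.Icc 1 k, (a i : ℚ) :=
      Finset.sum_nonneg (fun i _ => by positivity)
    have h0 : (0:ℚ) ≤ (∑ i ∈ Finset.Icc 1 k, (a i : ℚ))/2 + 3*(a i₀ : ℚ)/2 := by linarith
    have hpow := pow_le_pow_left₀ h0 hle k
    linarith
  have hone : {x : Fin k → ℕ | ∑ i, a (i.1 + 1) * x i ≤ n} = {0} := by
    ext x
    simp only [Set.mem_setOf_eq, Set.mem_singleton_iff]
    constructor
    · intro hx
      funext i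
      simp only [Pi.zero_apply]
      by_contra hxi
      have h1 : 1 ≤ x i := Nat.pos_of_ne_zero hxi
      have h2 : a (i.1+1) * x i ≤ n :=
        le_trans (Finset.single_le_sum (f := fun i' : Fin k => a (i'.1+1) * x i')
          (fun _ _ => Nat.zero_le _) (Finset.mem_univ i)) hx
      have h3 : a (i.1+1) ≤ a (i.1+1) * x i := Nat.le_mul_of_pos_right _ h1
      have hik := i.isLt
      have h4 := key (i.1+1) (Finset.mem_Icc.mpr ⟨by omega, by omega⟩)
      omega
    · rintro rfl
      simp
  unfold Dhat
  rw [hone]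
  exact Set.ncard_singleton 0
end
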